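/- arXiv:2303.02465 — 7 statements merged into one kernel-verified Lean document; each statement's English description precedes it below -/
import Mathlib

section
/- Let μ be an even log-concave probability measure on ℝ with unbounded support, and suppose the set J = {t ∈ ℝ : ∫ e^{tx} dμ(x) < ∞} is bounded. Then J is an open symmetric interval (-t*, t*) for some t* > 0, and the logarithmic moment generating function Λ_μ(t) = ln ∫ e^{tx} dμ(x) tends to +∞ as t ↑ t*. -/
open MeasureTheory Filter Set Real Topology Pointwise
open scoped ENNReal

/-- Integrability of `exp (t*x)` from an exponential tail bound at a faster rate. -/
lemma aux_int (μ : Measure ℝ) [IsProbabilityMeasure μ] {t t' C : ℝ} (ht : 0 < t) (htt' : t < t')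
    (hC : 0 ≤ C)
    (hF : ∀ x ≥ (0:ℝ), (μ (Ici x)).toReal ≤ C * exp (-t' * x)) :
    Integrable (fun x => exp (t * x)) μ := by
  have hmeas : Measurable fun x : ℝ => exp (t * x) :=
    (measurable_const.mul measurable_id).exp
  refine ⟨hmeas.aestronglyMeasurable, ?_⟩
  rw [hasFiniteIntegral_iff_ofReal (ae_of_all _ fun x => (exp_pos _).le)]
  rw [← lintegral_add_compl (μ := μ) (A := Ici (0:ℝ)) (fun x => ENNReal.ofReal (exp (t * x)))
    measurableSet_Ici]
  have hIio : ∫⁻ x in (Ici (0:ℝ))ᶜ, ENNReal.ofReal (exp (t * x)) ∂μ ≤ 1 := by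
    have h1 : ∫⁻ x in (Ici (0:ℝ))ᶜ, ENNReal.ofReal (exp (t * x)) ∂μ
        ≤ ∫⁻ _ in (Ici (0:ℝ))ᶜ, 1 ∂μ := by
      refine setLIntegral_mono' measurableSet_Ici.compl fun x hx => ?_
      simp only [compl_Ici, mem_Iio] at hx
      have : exp (t * x) ≤ 1 := exp_le_one_iff.2 (by nlinarith)
      simpa using ENNReal.ofReal_le_ofReal this
    calc _ ≤ ∫⁻ _ in (Ici (0:ℝ))ᶜ, 1 ∂μ := h1
      _ = μ (Ici (0:ℝ))ᶜ := by simp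
      _ ≤ 1 := prob_le_one
  have hIci : ∫⁻ x in Ici (0:ℝ), ENNReal.ofReal (exp (t * x)) ∂μ < ⊤ := by
    have lc := lintegral_eq_lintegral_meas_lt (μ.restrict (Ici (0:ℝ)))
      (f := fun x => exp (t * x)) (ae_of_all _ fun x => (exp_pos _).le)
      hmeas.aemeasurable
    rw [lc]
    have hsplit : (Ioi (0:ℝ)) = Ioc 0 1 ∪ Ioi 1 := by
      rw [Ioc_union_Ioi_eq_Ioi zero_le_one]
    rw [hsplit, lintegral_union measurableSet_Ioi Ioc_disjoint_Ioi_same]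
    have h1 : ∫⁻ s in Ioc (0:ℝ) 1, (μ.restrict (Ici 0)) {a : ℝ | s < exp (t * a)} ≤ 1 := by
      calc ∫⁻ s in Ioc (0:ℝ) 1, (μ.restrict (Ici 0)) {a : ℝ | s < exp (t * a)}
          ≤ ∫⁻ _ in Ioc (0:ℝ) 1, 1 := by
            refine setLIntegral_mono' measurableSet_Ioc fun s _ => ?_
            calc (μ.restrict (Ici 0)) {a : ℝ | s < exp (t * a)} ≤ μ {a : ℝ | s < exp (t * a)} :=
                Measure.restrict_le_self _
              _ ≤ 1 := prob_le_one
        _ = 1 := by simp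
    have h2 : ∫⁻ s in Ioi (1:ℝ), (μ.restrict (Ici 0)) {a : ℝ | s < exp (t * a)} < ⊤ := by
      have hbound : ∀ s ∈ Ioi (1:ℝ), (μ.restrict (Ici 0)) {a : ℝ | s < exp (t * a)}
          ≤ ENNReal.ofReal (C * s ^ (-(t'/t))) := by
        intro s hs
        have hs1 : (1:ℝ) < s := hs
        have hs0 : (0:ℝ) < s := lt_trans one_pos hs1
        have hy : {a : ℝ | s < exp (t * a)} = Ioi (Real.log s / t) := by
          ext a
          simp only [mem_setOf_eq, mem_Ioi]
          rw [div_lt_iff₀ ht, mul_comm a t, log_lt_iff_lt_exp hs0]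
        rw [hy]
        have hy0 : 0 ≤ Real.log s / t := div_nonneg (Real.log_nonneg hs1.le) ht.le
        have hsub : (μ.restrict (Ici (0:ℝ))) (Ioi (Real.log s / t)) ≤ μ (Ici (Real.log s / t)) :=
          le_trans (Measure.restrict_le_self _) (measure_mono Ioi_subset_Ici_self)
        refine hsub.trans ?_
        have := hF _ hy0
        have hrw : C * exp (-t' * (Real.log s / t)) = C * s ^ (-(t'/t)) := by
          rw [Real.rpow_def_of_pos hs0]
          ring_nf
        calc μ (Ici (Real.log s / t)) = ENNReal.ofReal ((μ (Ici (Real.log s / t))).toReal) := by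
              rw [ENNReal.ofReal_toReal (measure_ne_top μ _)]
          _ ≤ ENNReal.ofReal (C * exp (-t' * (Real.log s / t))) := ENNReal.ofReal_le_ofReal this
          _ = ENNReal.ofReal (C * s ^ (-(t'/t))) := by rw [hrw]
      have hexp : -(t'/t) < -1 := by
        rw [neg_lt_neg_iff]
        exact (one_lt_div ht).2 htt'
      have hint : IntegrableOn (fun s : ℝ => C * s ^ (-(t'/t))) (Ioi 1) :=
        (integrableOn_Ioi_rpow_of_lt hexp one_pos).const_mul C
      have hfin : ∫⁻ s in Ioi (1:ℝ), ENNReal.ofReal (C * s ^ (-(t'/t))) < ⊤ := by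
        have h := hint.2
        rwa [hasFiniteIntegral_iff_ofReal ?_] at h
        filter_upwards [ae_restrict_mem measurableSet_Ioi] with s hs
        have : (0:ℝ) < s := lt_trans one_pos hs
        positivity
      exact lt_of_le_of_lt (setLIntegral_mono' measurableSet_Ioi hbound) hfin
    exact ENNReal.add_lt_top.2 ⟨lt_of_le_of_lt h1 ENNReal.one_lt_top, h2⟩
  exact ENNReal.add_lt_top.2 ⟨hIci, lt_of_le_of_lt hIio ENNReal.one_lt_top⟩

lemma aux_nonint (μ : Measure ℝ) [IsProbabilityMeasure μ] {β c : ℝ} (hβ : 0 < β) (hc : 0 < c)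
    (hF : ∀ x ≥ (0:ℝ), c * exp (-β * x) ≤ (μ (Ici x)).toReal) :
    ∫⁻ x in Ici (0:ℝ), ENNReal.ofReal (exp (β * x)) ∂μ = ⊤ := by
  have hmeas : Measurable fun x : ℝ => exp (β * x) :=
    (measurable_const.mul measurable_id).exp
  rw [lintegral_eq_lintegral_meas_lt (μ.restrict (Ici (0:ℝ)))
    (f := fun x => exp (β * x)) (ae_of_all _ fun x => (exp_pos _).le) hmeas.aemeasurable]
  rw [eq_top_iff]
  refine le_trans ?_ (lintegral_mono_set (Ioi_subset_Ioi zero_le_one))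
  have hbound : ∀ s ∈ Ioi (1:ℝ), ENNReal.ofReal (c * exp (-β)) * ENNReal.ofReal s⁻¹
      ≤ (μ.restrict (Ici (0:ℝ))) {a : ℝ | s < exp (β * a)} := by
    intro s hs
    have hs1 : (1:ℝ) < s := hs
    have hs0 : (0:ℝ) < s := lt_trans one_pos hs1
    have hy : {a : ℝ | s < exp (β * a)} = Ioi (Real.log s / β) := by
      ext a
      simp only [mem_setOf_eq, mem_Ioi]
      rw [div_lt_iff₀ hβ, mul_comm a β, log_lt_iff_lt_exp hs0]
    have hy0 : 0 ≤ Real.log s / β := div_nonneg (Real.log_nonneg hs1.le) hβ.le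
    have hsubset : Ioi (Real.log s / β) ∩ Ici (0:ℝ) = Ioi (Real.log s / β) :=
      inter_eq_left.2 (fun x hx => le_trans hy0 (le_of_lt hx))
    rw [hy, Measure.restrict_apply measurableSet_Ioi, hsubset]
    have hsub : μ (Ici (Real.log s / β + 1)) ≤ μ (Ioi (Real.log s / β)) :=
      measure_mono (fun x hx => lt_of_lt_of_le (by linarith : Real.log s / β < Real.log s / β + 1) hx)
    refine le_trans ?_ hsub
    have h1 := hF _ (by linarith : (0:ℝ) ≤ Real.log s / β + 1)
    have hrw : c * exp (-β * (Real.log s / β + 1)) = (c * exp (-β)) * s⁻¹ := by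
      have : -β * (Real.log s / β + 1) = -Real.log s + -β := by field_simp; ring
      rw [this, Real.exp_add, Real.exp_neg, Real.exp_log hs0]
      ring
    calc ENNReal.ofReal (c * exp (-β)) * ENNReal.ofReal s⁻¹
        = ENNReal.ofReal (c * exp (-β * (Real.log s / β + 1))) := by
          rw [hrw, ENNReal.ofReal_mul (by positivity : (0:ℝ) ≤ c * exp (-β))]
      _ ≤ ENNReal.ofReal ((μ (Ici (Real.log s / β + 1))).toReal) := ENNReal.ofReal_le_ofReal h1
      _ = μ (Ici (Real.log s / β + 1)) := ENNReal.ofReal_toReal (measure_ne_top μ _)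
  refine le_trans ?_ (setLIntegral_mono' measurableSet_Ioi hbound)
  rw [lintegral_const_mul' _ _ ENNReal.ofReal_ne_top]
  have hdiv : ∫⁻ s in Ioi (1:ℝ), ENNReal.ofReal s⁻¹ = ⊤ := by
    by_contra h
    have hfi : HasFiniteIntegral (fun s : ℝ => s⁻¹) (volume.restrict (Ioi 1)) := by
      rw [hasFiniteIntegral_iff_ofReal ?_]
      · exact lt_top_iff_ne_top.2 h
      · filter_upwards [ae_restrict_mem measurableSet_Ioi] with s hs
        exact inv_nonneg.2 (le_of_lt (lt_trans one_pos hs))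
    have hio : IntegrableOn (fun s : ℝ => s⁻¹) (Ioi 1) :=
      ⟨measurable_inv.aestronglyMeasurable, hfi⟩
    have hio2 : IntegrableOn (fun s : ℝ => s ^ (-1 : ℝ)) (Ioi 1) :=
      hio.congr_fun (fun x _ => (Real.rpow_neg_one x).symm) measurableSet_Ioi
    rw [integrableOn_Ioi_rpow_iff one_pos] at hio2
    exact absurd hio2 (by norm_num)
  rw [hdiv, ENNReal.mul_top (ENNReal.ofReal_pos.2 (by positivity)).ne']

lemma aux_tail (μ : Measure ℝ) [IsProbabilityMeasure μ]
    (hlc : ∀ A B : Set ℝ, IsCompact A → IsCompact B → ∀ l : ℝ, l ∈ Ioo (0:ℝ) 1 →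
      μ A ^ l * μ B ^ (1 - l) ≤ μ (l • A + (1 - l) • B))
    (a b l : ℝ) (hl : l ∈ Ioo (0:ℝ) 1) :
    μ (Ici a) ^ l * μ (Ici b) ^ (1 - l) ≤ μ (Ici (l * a + (1 - l) * b)) := by
  obtain ⟨hl0, hl1⟩ := hl
  have hl1' : 0 < 1 - l := by linarith
  have key : ∀ n : ℕ, a ≤ n → b ≤ n →
      μ (Icc a n) ^ l * μ (Icc b n) ^ (1 - l) ≤ μ (Ici (l * a + (1 - l) * b)) := by
    intro n han hbn
    refine (hlc (Icc a n) (Icc b n) isCompact_Icc isCompact_Icc l ⟨hl0, hl1⟩).trans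
      (measure_mono ?_)
    rintro x ⟨y, hy, z, hz, rfl⟩
    obtain ⟨y', hy', rfl⟩ := hy
    obtain ⟨z', hz', rfl⟩ := hz
    simp only [smul_eq_mul, mem_Ici]
    have h1 := hy'.1
    have h2 := hz'.1
    nlinarith
  have hmonA : Monotone fun n : ℕ => Icc a (n : ℝ) := fun m n h =>
    Icc_subset_Icc_right (by exact_mod_cast h)
  have hmonB : Monotone fun n : ℕ => Icc b (n : ℝ) := fun m n h =>
    Icc_subset_Icc_right (by exact_mod_cast h)
  have hUA : ⋃ n : ℕ, Icc a (n : ℝ) = Ici a := by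
    ext x
    simp only [mem_iUnion, mem_Icc, mem_Ici]
    constructor
    · rintro ⟨n, h1, _⟩; exact h1
    · intro hx
      obtain ⟨n, hn⟩ := exists_nat_ge x
      exact ⟨n, hx, hn⟩
  have hUB : ⋃ n : ℕ, Icc b (n : ℝ) = Ici b := by
    ext x
    simp only [mem_iUnion, mem_Icc, mem_Ici]
    constructor
    · rintro ⟨n, h1, _⟩; exact h1
    · intro hx
      obtain ⟨n, hn⟩ := exists_nat_ge x
      exact ⟨n, hx, hn⟩
  have hA : Tendsto (fun n : ℕ => μ (Icc a (n : ℝ))) atTop (𝓝 (μ (Ici a))) := by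
    have := tendsto_measure_iUnion_atTop (μ := μ) hmonA
    rwa [hUA] at this
  have hB : Tendsto (fun n : ℕ => μ (Icc b (n : ℝ))) atTop (𝓝 (μ (Ici b))) := by
    have := tendsto_measure_iUnion_atTop (μ := μ) hmonB
    rwa [hUB] at this
  have hmul : Tendsto (fun n : ℕ => μ (Icc a (n : ℝ)) ^ l * μ (Icc b (n : ℝ)) ^ (1 - l)) atTop
      (𝓝 (μ (Ici a) ^ l * μ (Ici b) ^ (1 - l))) := by
    refine ENNReal.Tendsto.mul ((ENNReal.continuous_rpow_const.tendsto _).comp hA) ?_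
      ((ENNReal.continuous_rpow_const.tendsto _).comp hB) ?_
    · exact Or.inr (ENNReal.rpow_ne_top_of_nonneg hl1'.le (measure_ne_top μ _))
    · exact Or.inr (ENNReal.rpow_ne_top_of_nonneg hl0.le (measure_ne_top μ _))
  refine le_of_tendsto hmul ?_
  obtain ⟨na, hna⟩ := exists_nat_ge a
  obtain ⟨nb, hnb⟩ := exists_nat_ge b
  filter_upwards [eventually_ge_atTop na, eventually_ge_atTop nb] with n h1 h2
  exact key n (hna.trans (by exact_mod_cast h1)) (hnb.trans (by exact_mod_cast h2))

theorem stmt0 (μ : Measure ℝ) [IsProbabilityMeasure μ]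
    (heven : μ.map (fun x => -x) = μ)
    (hlc : ∀ A B : Set ℝ, IsCompact A → IsCompact B → ∀ l : ℝ, l ∈ Ioo (0:ℝ) 1 →
      μ A ^ l * μ B ^ (1 - l) ≤ μ (l • A + (1 - l) • B))
    (hsupp : ∀ x : ℝ, 0 < μ (Ici x))
    (hbdd : Bornology.IsBounded {t : ℝ | Integrable (fun x => exp (t * x)) μ}) :
    ∃ tstar : ℝ, 0 < tstar ∧
      {t : ℝ | Integrable (fun x => exp (t * x)) μ} = Ioo (-tstar) tstar ∧
      Tendsto (fun t => log (∫ x, exp (t * x) ∂μ)) (𝓝[<] tstar) atTop := by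
  have hFpos : ∀ x : ℝ, 0 < (μ (Ici x)).toReal := fun x =>
    ENNReal.toReal_pos (hsupp x).ne' (measure_ne_top μ _)
  have hFle1 : ∀ x : ℝ, (μ (Ici x)).toReal ≤ 1 := fun x => by
    have := ENNReal.toReal_mono ENNReal.one_ne_top (prob_le_one (μ := μ) (s := Ici x))
    simpa using this
  set g : ℝ → ℝ := fun x => Real.log ((μ (Ici x)).toReal) with hgdef
  have hgF : ∀ x : ℝ, exp (g x) = (μ (Ici x)).toReal := fun x => Real.exp_log (hFpos x)
  have hg0 : g 0 ≤ 0 := Real.log_nonpos (hFpos 0).le (hFle1 0)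
  -- concavity of g
  have hgconc : ∀ a b l : ℝ, l ∈ Ioo (0:ℝ) 1 →
      l * g a + (1 - l) * g b ≤ g (l * a + (1 - l) * b) := by
    intro a b l hl
    have h := aux_tail μ hlc a b l hl
    have h2 := ENNReal.toReal_mono (measure_ne_top μ _) h
    rw [ENNReal.toReal_mul, ← ENNReal.toReal_rpow, ← ENNReal.toReal_rpow] at h2
    have hpa : (0:ℝ) < (μ (Ici a)).toReal ^ l := Real.rpow_pos_of_pos (hFpos a) l
    have hpb : (0:ℝ) < (μ (Ici b)).toReal ^ (1 - l) := Real.rpow_pos_of_pos (hFpos b) (1 - l)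
    have h3 := Real.log_le_log (mul_pos hpa hpb) h2
    rwa [Real.log_mul hpa.ne' hpb.ne', Real.log_rpow (hFpos a),
      Real.log_rpow (hFpos b)] at h3
  -- slope monotonicity
  have hslope : ∀ x y : ℝ, 0 < x → x ≤ y → (g 0 - g x) / x ≤ (g 0 - g y) / y := by
    intro x y hx hxy
    rcases eq_or_lt_of_le hxy with rfl | hlt
    · exact le_rfl
    have hy : 0 < y := hx.trans hlt
    have hl : x / y ∈ Ioo (0:ℝ) 1 := ⟨div_pos hx hy, (div_lt_one hy).2 hlt⟩
    have hcx := hgconc y 0 (x / y) hl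
    have hxy' : (x / y) * y + (1 - x / y) * 0 = x := by field_simp; ring
    rw [hxy'] at hcx
    rw [div_le_div_iff₀ hx hy]
    have hxx : x / y * y = x := by field_simp
    have e1 : x / y * y * g y = x * g y := by rw [hxx]
    have e2 : x / y * y * g 0 = x * g 0 := by rw [hxx]
    have hmul := mul_le_mul_of_nonneg_right hcx hy.le
    nlinarith [hmul, e1, e2]
  set S : Set ℝ := (fun x => (g 0 - g x) / x) '' Ioi 0 with hSdef
  have hSne : S.Nonempty := ⟨(g 0 - g 1) / 1, mem_image_of_mem _ (mem_Ioi.2 one_pos)⟩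
  -- integrability criterion
  have hInt : ∀ t : ℝ, 0 < t → (∃ x0 > (0:ℝ), t < (g 0 - g x0) / x0) →
      Integrable (fun x => exp (t * x)) μ := by
    rintro t ht ⟨x0, hx0, hts⟩
    set t' := (g 0 - g x0) / x0 with ht'def
    have ht' : 0 < t' := ht.trans hts
    refine aux_int μ ht hts (exp_pos (t' * x0)).le ?_
    intro x hx
    rcases le_or_gt x x0 with h | h
    · calc (μ (Ici x)).toReal ≤ 1 := hFle1 x
        _ ≤ exp (t' * x0) * exp (-t' * x) := by
            rw [← Real.exp_add]
            refine Real.one_le_exp (by nlinarith)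
    · have hsl := hslope x0 x hx0 h.le
      have hgx : g x ≤ -t' * x := by
        have hxpos : 0 < x := hx0.trans h
        rw [le_div_iff₀ hxpos] at hsl
        linarith [hg0]
      calc (μ (Ici x)).toReal = exp (g x) := (hgF x).symm
        _ ≤ exp (-t' * x) := exp_le_exp.2 hgx
        _ ≤ exp (t' * x0) * exp (-t' * x) := by
            nlinarith [Real.one_le_exp (by positivity : (0:ℝ) ≤ t' * x0), exp_pos (-t' * x)]
  -- S is bounded above
  have hSbdd : BddAbove S := by
    by_contra hnb
    obtain ⟨R, hR⟩ := hbdd.subset_closedBall 0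
    set t : ℝ := max R 0 + 1 with htdef
    have ht : 0 < t := by positivity
    obtain ⟨y, hyS, hty⟩ := not_bddAbove_iff.1 hnb t
    obtain ⟨x0, hx0, rfl⟩ := hyS
    have htJ : Integrable (fun x => exp (t * x)) μ := hInt t ht ⟨x0, hx0, hty⟩
    have := hR htJ
    rw [Metric.mem_closedBall, Real.dist_eq, sub_zero, abs_of_pos ht] at this
    have : max R 0 + 1 ≤ max R 0 := le_trans this (le_max_left R 0)
    linarith
  set β : ℝ := sSup S with hβdef
  have hβmem : ∀ x : ℝ, 0 < x → (g 0 - g x) / x ≤ β :=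
    fun x hx => le_csSup hSbdd (mem_image_of_mem _ hx)
  -- β > 0
  have hβpos : 0 < β := by
    have hiInter : ⋂ n : ℕ, Ici (n : ℝ) = ∅ := by
      ext x
      simp only [mem_iInter, mem_Ici, mem_empty_iff_false, iff_false, not_forall, not_le]
      obtain ⟨n, hn⟩ := exists_nat_gt x
      exact ⟨n, hn⟩
    have htend : Tendsto (fun n : ℕ => μ (Ici (n : ℝ))) atTop (𝓝 0) := by
      have h := tendsto_measure_iInter_atTop (μ := μ)
        (fun n : ℕ => (measurableSet_Ici (a := (n:ℝ))).nullMeasurableSet)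
        (fun m n h => Ici_subset_Ici.2 (by exact_mod_cast h)) ⟨0, measure_ne_top μ _⟩
      rwa [hiInter, measure_empty] at h
    have hev : ∀ᶠ n : ℕ in atTop, μ (Ici (n : ℝ)) < μ (Ici (0:ℝ)) :=
      htend.eventually_lt_const (hsupp 0)
    obtain ⟨n, hn, hn1⟩ := (hev.and (eventually_ge_atTop 1)).exists
    have hnpos : (0:ℝ) < n := by exact_mod_cast hn1
    have hFlt : (μ (Ici (n:ℝ))).toReal < (μ (Ici (0:ℝ))).toReal :=
      ENNReal.toReal_strict_mono (measure_ne_top μ _) hn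
    have hglt : g n < g 0 := Real.log_lt_log (hFpos _) hFlt
    have : 0 < (g 0 - g n) / n := div_pos (by linarith) hnpos
    exact lt_of_lt_of_le this (hβmem _ hnpos)
  -- lower tail bound at rate β
  have hlow : ∀ x ≥ (0:ℝ), (μ (Ici (0:ℝ))).toReal * exp (-β * x) ≤ (μ (Ici x)).toReal := by
    intro x hx
    rcases eq_or_lt_of_le hx with rfl | hxpos
    · simp
    · have h1 := hβmem x hxpos
      have h2 : g 0 - β * x ≤ g x := by
        have : g 0 - g x ≤ β * x := by
          rw [div_le_iff₀ hxpos] at h1; linarith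
        linarith
      calc (μ (Ici (0:ℝ))).toReal * exp (-β * x) = exp (g 0 + -β * x) := by
            rw [Real.exp_add, hgF]
        _ ≤ exp (g x) := exp_le_exp.2 (by linarith)
        _ = (μ (Ici x)).toReal := hgF x
  have hLβ : ∫⁻ x in Ici (0:ℝ), ENNReal.ofReal (exp (β * x)) ∂μ = ⊤ :=
    aux_nonint μ hβpos (hFpos 0) hlow
  -- symmetry
  have hsym : ∀ t : ℝ, Integrable (fun x => exp (t * x)) μ →
      Integrable (fun x => exp (-t * x)) μ := by
    intro t h
    have hmeas : AEStronglyMeasurable (fun x : ℝ => exp (-t * x)) (μ.map (fun x => -x)) := by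
      exact ((measurable_const.mul measurable_id).exp).aestronglyMeasurable
    have h2 : Integrable (fun x : ℝ => exp (-t * x)) (μ.map (fun x => -x)) := by
      rw [integrable_map_measure hmeas measurable_neg.aemeasurable]
      have : ((fun x : ℝ => exp (-t * x)) ∘ fun x : ℝ => -x) = fun x : ℝ => exp (t * x) := by
        funext x; simp [neg_mul_neg]
      rwa [this]
    rwa [heven] at h2
  -- non-integrability for t ≥ β
  have hnotint : ∀ t : ℝ, β ≤ t → ¬ Integrable (fun x => exp (t * x)) μ := by
    intro t htβ hI
    have h1 : ∫⁻ x in Ici (0:ℝ), ENNReal.ofReal (exp (β * x)) ∂μ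
        ≤ ∫⁻ x in Ici (0:ℝ), ENNReal.ofReal (exp (t * x)) ∂μ := by
      refine setLIntegral_mono' measurableSet_Ici fun x hx => ?_
      exact ENNReal.ofReal_le_ofReal (exp_le_exp.2 (mul_le_mul_of_nonneg_right htβ hx))
    have h2 : ∫⁻ x in Ici (0:ℝ), ENNReal.ofReal (exp (t * x)) ∂μ
        ≤ ∫⁻ x, ENNReal.ofReal (exp (t * x)) ∂μ := setLIntegral_le_lintegral _ _
    have h3 : ∫⁻ x, ENNReal.ofReal (exp (t * x)) ∂μ < ⊤ := by
      have := hI.hasFiniteIntegral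
      rwa [hasFiniteIntegral_iff_ofReal (ae_of_all _ fun x => (exp_pos _).le)] at this
    rw [hLβ] at h1
    exact absurd (lt_of_le_of_lt (h1.trans h2) h3) (lt_irrefl _)
  -- integrability for 0 ≤ t < β
  have hJint : ∀ t : ℝ, 0 ≤ t → t < β → Integrable (fun x => exp (t * x)) μ := by
    intro t ht0 htβ
    rcases eq_or_lt_of_le ht0 with rfl | htpos
    · simpa using (integrable_const (1:ℝ)).congr (ae_of_all _ fun x => by simp)
    · obtain ⟨y, hyS, hty⟩ := exists_lt_of_lt_csSup hSne htβ
      obtain ⟨x0, hx0, rfl⟩ := hyS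
      exact hInt t htpos ⟨x0, hx0, hty⟩
  -- set equality
  have hJeq : {t : ℝ | Integrable (fun x => exp (t * x)) μ} = Ioo (-β) β := by
    ext t
    simp only [mem_setOf_eq, mem_Ioo]
    constructor
    · intro hI
      constructor
      · by_contra h
        push_neg at h
        have h2 : β ≤ -t := by linarith
        exact hnotint (-t) h2 (by simpa using hsym t hI)
      · by_contra h
        push_neg at h
        exact hnotint t h hI
    · rintro ⟨h1, h2⟩
      rcases le_or_gt 0 t with ht | ht
      · exact hJint t ht h2
      · have := hsym (-t) (hJint (-t) (by linarith) (by linarith))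
        simpa [neg_neg] using this
  refine ⟨β, hβpos, hJeq, ?_⟩
  -- divergence
  set L : ℝ → ℝ≥0∞ := fun t => ∫⁻ x in Ici (0:ℝ), ENNReal.ofReal (exp (t * x)) ∂μ with hLdef
  have hLmono : ∀ s t : ℝ, s ≤ t → L s ≤ L t := by
    intro s t hst
    refine setLIntegral_mono' measurableSet_Ici fun x hx => ?_
    exact ENNReal.ofReal_le_ofReal (exp_le_exp.2 (mul_le_mul_of_nonneg_right hst hx))
  -- MCT
  set tn : ℕ → ℝ := fun n => β - β / (n + 1) with htndef
  have htn_mono : Monotone tn := by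
    intro m n h
    have hc : (m:ℝ) + 1 ≤ (n:ℝ) + 1 := by exact_mod_cast Nat.succ_le_succ h
    have hd : β / ((n:ℝ) + 1) ≤ β / ((m:ℝ) + 1) := by
      gcongr
    simp only [htndef]
    linarith
  have htn_lt : ∀ n, tn n < β := by
    intro n
    have h1 : 0 < β / ((n:ℝ) + 1) := by positivity
    simp only [htndef]
    linarith
  have htn_nonneg : ∀ n, 0 ≤ tn n := by
    intro n
    have h1 : (1:ℝ) ≤ (n:ℝ) + 1 := by
      have : (0:ℝ) ≤ (n:ℝ) := Nat.cast_nonneg n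
      linarith
    have h2 : β / ((n:ℝ) + 1) ≤ β := div_le_self hβpos.le h1
    simp only [htndef]
    linarith
  have htn_tendsto : Tendsto tn atTop (𝓝 β) := by
    have hden : Tendsto (fun n : ℕ => (n:ℝ) + 1) atTop atTop :=
      tendsto_atTop_add_const_right _ 1 tendsto_natCast_atTop_atTop
    have h1 : Tendsto (fun n : ℕ => β / ((n:ℝ) + 1)) atTop (𝓝 0) :=
      tendsto_const_nhds.div_atTop hden
    have h2 : Tendsto (fun n : ℕ => β - β / ((n:ℝ) + 1)) atTop (𝓝 (β - 0)) :=
      (tendsto_const_nhds (x := β) (f := atTop)).sub h1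
    simpa [htndef] using h2
  have hMCT : (⨆ n, L (tn n)) = ⊤ := by
    have hswap : (⨆ n, L (tn n)) = ∫⁻ x in Ici (0:ℝ), ⨆ n, ENNReal.ofReal (exp (tn n * x)) ∂μ := by
      refine (lintegral_iSup' (fun n => ((measurable_const.mul measurable_id).exp).ennreal_ofReal.aemeasurable) ?_).symm
      filter_upwards [ae_restrict_mem measurableSet_Ici] with x hx
      intro m n h
      exact ENNReal.ofReal_le_ofReal (exp_le_exp.2 (mul_le_mul_of_nonneg_right (htn_mono h) hx))
    rw [hswap]
    rw [← hLβ]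
    refine setLIntegral_congr_fun measurableSet_Ici (fun x hx => ?_)
    have hmono : Monotone fun n => ENNReal.ofReal (exp (tn n * x)) := fun m n h =>
      ENNReal.ofReal_le_ofReal (exp_le_exp.2 (mul_le_mul_of_nonneg_right (htn_mono h) hx))
    have htendx : Tendsto (fun n => ENNReal.ofReal (exp (tn n * x))) atTop
        (𝓝 (ENNReal.ofReal (exp (β * x)))) := by
      refine (ENNReal.continuous_ofReal.tendsto _).comp ?_
      exact (Real.continuous_exp.tendsto _).comp ((htn_tendsto.mul_const x))
    exact tendsto_nhds_unique (tendsto_atTop_iSup hmono) htendx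
  rw [tendsto_atTop]
  intro M
  have hsup : ENNReal.ofReal (exp M) < ⨆ n, L (tn n) := by
    rw [hMCT]; exact ENNReal.ofReal_lt_top.trans_le le_top
  obtain ⟨n, hn⟩ := lt_iSup_iff.1 hsup
  have hmem : Ioo (tn n) β ∈ 𝓝[<] β := Ioo_mem_nhdsLT_of_mem ⟨htn_lt n, le_rfl⟩
  filter_upwards [hmem] with t ht
  have hti : Integrable (fun x => exp (t * x)) μ := hJint t ((htn_nonneg n).trans ht.1.le) ht.2
  have h1 : ENNReal.ofReal (exp M) < L t := lt_of_lt_of_le hn (hLmono _ _ ht.1.le)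
  have hLt_fin : L t ≠ ⊤ := by
    have h3 : ∫⁻ x, ENNReal.ofReal (exp (t * x)) ∂μ < ⊤ := by
      have := hti.hasFiniteIntegral
      rwa [hasFiniteIntegral_iff_ofReal (ae_of_all _ fun x => (exp_pos _).le)] at this
    exact ((setLIntegral_le_lintegral _ _).trans_lt h3).ne
  have h2 : exp M ≤ (L t).toReal := by
    rw [← ENNReal.ofReal_le_iff_le_toReal hLt_fin]
    exact h1.le
  have h3 : (L t).toReal = ∫ x in Ici (0:ℝ), exp (t * x) ∂μ := by
    rw [integral_eq_lintegral_of_nonneg_ae (ae_of_all _ fun x => (exp_pos _).le)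
      (hti.aestronglyMeasurable.restrict)]
  have h4 : ∫ x in Ici (0:ℝ), exp (t * x) ∂μ ≤ ∫ x, exp (t * x) ∂μ :=
    setIntegral_le_integral hti (ae_of_all _ fun x => (exp_pos _).le)
  have h5 : exp M ≤ ∫ x, exp (t * x) ∂μ := by
    rw [h3] at h2; linarith
  calc M = log (exp M) := (Real.log_exp M).symm
    _ ≤ log (∫ x, exp (t * x) ∂μ) := Real.log_le_log (exp_pos M) h5
end

section
/- Let μ be an even log-concave probability measure on ℝ with density f = e^{-q} (q convex, even) and unbounded support, such that {t : ∫ e^{tx} f(x) dx < ∞} is bounded. Then the limit t* = lim_{x→∞} (q(x) - q(0))/x exists, is finite and positive, and for every t with 0 < t < t* one has ∫_0^∞ e^{tx} f(x) dx < ∞, while ∫_0^∞ e^{t* x} f(x) dx = ∞. -/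
open MeasureTheory Filter Set Real Topology

/-- Integrability on `[0, ∞)` from a linear lower bound on `q` at infinity. -/
lemma aux_integrableOn_Ici (q : ℝ → ℝ) (hcont : Continuous q) {t c M : ℝ}
    (hM : 0 ≤ M) (htc : t < c)
    (hlow : ∀ x, M ≤ x → c * x ≤ q x - q 0) :
    IntegrableOn (fun x => exp (t * x) * exp (-q x)) (Ici 0) := by
  have hmeas : Continuous (fun x => exp (t * x) * exp (-q x)) := by
    exact (continuous_const.mul continuous_id).rexp.mul hcont.neg.rexp
  have h1 : IntegrableOn (fun x => exp (t * x) * exp (-q x)) (Icc 0 M) :=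
    hmeas.continuousOn.integrableOn_compact isCompact_Icc
  have h2 : IntegrableOn (fun x => exp (t * x) * exp (-q x)) (Ici M) := by
    rw [integrableOn_Ici_iff_integrableOn_Ioi]
    have hexp : IntegrableOn (fun x : ℝ => exp (-q 0) * exp (-(c - t) * x)) (Ioi M) :=
      (exp_neg_integrableOn_Ioi M (by linarith)).const_mul _
    refine hexp.mono' hmeas.aestronglyMeasurable.restrict ?_
    filter_upwards [ae_restrict_mem measurableSet_Ioi] with x hx
    have hx' : M ≤ x := le_of_lt hx
    have hq := hlow x hx'
    rw [norm_eq_abs, ← exp_add, abs_of_nonneg (exp_pos _).le, ← exp_add]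
    exact exp_le_exp.2 (by nlinarith)
  have hsub : Ici (0 : ℝ) ⊆ Icc 0 M ∪ Ici M := by
    intro x hx
    rcases le_total x M with h | h
    · exact Or.inl ⟨hx, h⟩
    · exact Or.inr h
  exact (h1.union h2).mono_set hsub

/-- Integrability on all of `ℝ` using evenness. -/
lemma aux_integrable (q : ℝ → ℝ) (hqe : ∀ x, q (-x) = q x) (hcont : Continuous q)
    {t c M : ℝ} (hM : 0 ≤ M) (htc : |t| < c)
    (hlow : ∀ x, M ≤ x → c * x ≤ q x - q 0) :
    Integrable (fun x => exp (t * x) * exp (-q x)) := by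
  rw [← integrableOn_univ, ← Iic_union_Ici (a := (0 : ℝ)), integrableOn_union]
  constructor
  · rw [← (Measure.measurePreserving_neg (volume : Measure ℝ)).integrableOn_comp_preimage
        (Homeomorph.neg ℝ).measurableEmbedding]
    simp only [Function.comp_def, neg_preimage, neg_Iic, neg_zero]
    have heq : (fun x : ℝ => exp (t * -x) * exp (-q (-x)))
        = fun x : ℝ => exp ((-t) * x) * exp (-q x) := by
      funext x; rw [hqe]; ring_nf
    rw [heq]
    exact aux_integrableOn_Ici q hcont hM (lt_of_le_of_lt (neg_le_abs t) htc) hlow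
  · exact aux_integrableOn_Ici q hcont hM (lt_of_le_of_lt (le_abs_self t) htc) hlow

theorem stmt1 (q : ℝ → ℝ) (hq : ConvexOn ℝ univ q) (hqe : ∀ x, q (-x) = q x)
    (hprob : ∫ x, exp (-q x) = 1)
    (hbdd : Bornology.IsBounded
      {t : ℝ | Integrable (fun x => exp (t * x) * exp (-q x))}) :
    ∃ tstar : ℝ, 0 < tstar ∧
      Tendsto (fun x => (q x - q 0) / x) atTop (𝓝 tstar) ∧
      (∀ t : ℝ, 0 < t → t < tstar →
        IntegrableOn (fun x => exp (t * x) * exp (-q x)) (Ici 0)) ∧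
      ¬ IntegrableOn (fun x => exp (tstar * x) * exp (-q x)) (Ici 0) := by
  have hcont : Continuous q := by
    rw [← continuousOn_univ]
    exact hq.continuousOn isOpen_univ
  -- q 0 is the minimum
  have hmin : ∀ x, q 0 ≤ q x := by
    intro x
    have h := hq.2 (mem_univ x) (mem_univ (-x)) (by norm_num : (0:ℝ) ≤ 1/2)
      (by norm_num : (0:ℝ) ≤ 1/2) (by norm_num)
    have h2 : (1/2 : ℝ) • x + (1/2 : ℝ) • (-x) = 0 := by
      simp [smul_eq_mul]
    rw [h2, hqe] at h
    simp only [smul_eq_mul] at h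
    linarith
  -- slope monotonicity
  have hu : ∀ a b : ℝ, 0 < a → a ≤ b → (q a - q 0) / a ≤ (q b - q 0) / b := by
    intro a b ha hab
    have := hq.secant_mono (mem_univ 0) (mem_univ a) (mem_univ b)
      (ne_of_gt ha) (ne_of_gt (lt_of_lt_of_le ha hab)) hab
    simpa using this
  -- get a non-integrable t0
  obtain ⟨R, hR⟩ := hbdd.subset_closedBall (0 : ℝ)
  set t0 : ℝ := |R| + 1 with ht0def
  have ht0 : ¬ Integrable (fun x => exp (t0 * x) * exp (-q x)) := by
    intro h
    have := hR h
    rw [Metric.mem_closedBall, Real.dist_eq, sub_zero] at this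
    have h1 : t0 ≤ |t0| := le_abs_self _
    have h2 : (0:ℝ) ≤ |R| := abs_nonneg _
    have h3 : R ≤ |R| := le_abs_self _
    linarith [abs_of_nonneg (by linarith : (0:ℝ) ≤ t0) ▸ this]
  -- upper bound on slopes
  have hub : ∀ x, 1 ≤ x → (q x - q 0) / x ≤ |t0| + 1 := by
    intro x hx
    by_contra h
    push_neg at h
    have hx0 : (0:ℝ) < x := by linarith
    apply ht0
    refine aux_integrable q hqe hcont (le_of_lt hx0)
      (c := (q x - q 0) / x) (lt_trans (by linarith [le_abs_self t0, abs_nonneg t0]) h) ?_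
    intro y hy
    have hy0 : (0:ℝ) < y := lt_of_lt_of_le hx0 hy
    have := hu x y hx0 hy
    calc (q x - q 0) / x * y ≤ (q y - q 0) / y * y := by
          exact mul_le_mul_of_nonneg_right this (le_of_lt hy0) |>.trans_eq rfl
      _ = q y - q 0 := by field_simp
  -- define the monotone surrogate g and tstar
  set g : ℝ → ℝ := fun x => (q (max x 1) - q 0) / (max x 1) with hgdef
  have hg_mono : Monotone g := by
    intro a b hab
    exact hu _ _ (lt_of_lt_of_le one_pos (le_max_right a 1)) (max_le_max hab le_rfl)
  have hg_bdd : BddAbove (range g) := by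
    refine ⟨|t0| + 1, ?_⟩
    rintro _ ⟨x, rfl⟩
    exact hub _ (le_max_right x 1)
  set tstar : ℝ := ⨆ x, g x with htstardef
  have htend_g : Tendsto g atTop (𝓝 tstar) := tendsto_atTop_ciSup hg_mono hg_bdd
  have htend : Tendsto (fun x => (q x - q 0) / x) atTop (𝓝 tstar) := by
    refine htend_g.congr' ?_
    filter_upwards [eventually_ge_atTop (1 : ℝ)] with x hx
    rw [hgdef]; simp only [max_eq_left hx]
  -- u x ≤ tstar for 0 < x
  have hle : ∀ x : ℝ, 0 < x → (q x - q 0) / x ≤ tstar := by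
    intro x hx
    have h1 : (q x - q 0) / x ≤ g x :=
      hu x (max x 1) hx (le_max_left x 1)
    exact h1.trans (le_ciSup hg_bdd x)
  -- exp(-q) is integrable
  have hint : Integrable (fun x => exp (-q x)) := by
    by_contra h
    rw [integral_undef h] at hprob
    norm_num at hprob
  -- tstar > 0
  have htpos : 0 < tstar := by
    by_contra hpos
    push_neg at hpos
    have hqle : ∀ x : ℝ, q x ≤ q 0 := by
      have key : ∀ x : ℝ, 0 < x → q x ≤ q 0 := by
        intro x hx
        have h1 : (q x - q 0) / x ≤ 0 := (hle x hx).trans hpos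
        have := (div_le_iff₀ hx).mp h1
        linarith
      intro x
      rcases lt_trichotomy x 0 with h | h | h
      · have := key (-x) (by linarith)
        rw [hqe] at this; exact this
      · simp [h]
      · exact key x h
    have hconst : Integrable (fun _ : ℝ => exp (-q 0)) := by
      refine hint.mono' aestronglyMeasurable_const ?_
      filter_upwards with x
      rw [norm_eq_abs, abs_of_nonneg (exp_pos _).le]
      exact exp_le_exp.2 (by linarith [hqle x])
    rw [integrable_const_iff] at hconst
    rcases hconst with h | h
    · exact (exp_pos _).ne' h
    · have h := measure_lt_top (volume : Measure ℝ) univ; simp [Real.volume_univ] at h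
  refine ⟨tstar, htpos, htend, ?_, ?_⟩
  · -- integrability for 0 < t < tstar
    intro t ht htlt
    set c : ℝ := (t + tstar) / 2 with hcdef
    have hct : t < c := by rw [hcdef]; linarith
    have hcts : c < tstar := by rw [hcdef]; linarith
    -- find x0 ≥ 1 with c < u x0
    have hex : ∃ x0, 1 ≤ x0 ∧ c < (q x0 - q 0) / x0 := by
      by_contra h
      push_neg at h
      have : tstar ≤ c := by
        refine ciSup_le fun x => ?_
        exact h (max x 1) (le_max_right x 1)
      linarith
    obtain ⟨x0, hx01, hx0c⟩ := hex
    have hx00 : (0:ℝ) < x0 := lt_of_lt_of_le one_pos hx01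
    refine aux_integrableOn_Ici q hcont (le_of_lt hx00)
      (c := (q x0 - q 0) / x0) (lt_trans hct hx0c) ?_
    intro y hy
    have hy0 : (0:ℝ) < y := lt_of_lt_of_le hx00 hy
    have h1 := hu x0 y hx00 hy
    calc (q x0 - q 0) / x0 * y ≤ (q y - q 0) / y * y :=
          mul_le_mul_of_nonneg_right h1 (le_of_lt hy0)
      _ = q y - q 0 := by field_simp
  · -- non-integrability at tstar
    intro h
    have h1 : IntegrableOn (fun x => exp (tstar * x) * exp (-q x)) (Ici 1) :=
      h.mono_set (Ici_subset_Ici.2 zero_le_one)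
    have hconst : IntegrableOn (fun _ : ℝ => exp (-q 0)) (Ici 1) := by
      refine h1.mono' aestronglyMeasurable_const ?_
      filter_upwards [ae_restrict_mem measurableSet_Ici] with x hx
      have hx0 : (0:ℝ) < x := lt_of_lt_of_le one_pos hx
      have h2 : (q x - q 0) / x ≤ tstar := hle x hx0
      have h3 : q x - q 0 ≤ tstar * x := by
        have := (div_le_iff₀ hx0).mp h2
        linarith
      rw [norm_eq_abs, abs_of_nonneg (exp_pos _).le, ← exp_add]
      exact exp_le_exp.2 (by linarith)
    rw [IntegrableOn, integrable_const_iff] at hconst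
    rcases hconst with h' | h'
    · exact (exp_pos _).ne' h'
    · have h' := measure_lt_top (volume.restrict (Ici (1:ℝ))) univ; rw [Measure.restrict_apply_univ, Real.volume_Ici] at h'
      exact (lt_irrefl _ h')
end

section
/- Let μ be a non-degenerate even probability measure on ℝ with Λ_μ finite in a neighborhood of 0, and let x* = sup{x : μ([x,∞)) > 0}. For every x ∈ (0, x*) and every y ∈ (x, x*), the function q_x(t) = tx - Λ_μ(t) attains its supremum over [0,∞) at some point t in the open interval (0, m(y)/(y-x)), where m(y) = -ln μ([y,∞)); consequently there exists t > 0 with Λ_μ'(t) = x. -/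
open MeasureTheory Filter Set Real Metric Topology

theorem auxDeriv (μ : Measure ℝ) [IsProbabilityMeasure μ]
    (hInt : ∀ t : ℝ, Integrable (fun s => exp (t * s)) μ) (t₀ : ℝ) :
    Integrable (fun u => u * exp (t₀ * u)) μ ∧
    HasDerivAt (fun t => ∫ u, exp (t * u) ∂μ) (∫ u, u * exp (t₀ * u) ∂μ) t₀ := by
  set c : ℝ := |t₀| + 2 with hc
  have hbint : Integrable (fun a : ℝ => exp (c * a) + exp (-c * a)) μ := (hInt c).add (hInt (-c))
  have key := hasDerivAt_integral_of_dominated_loc_of_deriv_le (μ := μ)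
    (F := fun t u => exp (t * u)) (F' := fun t u => u * exp (t * u)) (x₀ := t₀)
    (bound := fun a => exp (c * a) + exp (-c * a)) (s := ball t₀ 1) (ball_mem_nhds t₀ one_pos)
    (Eventually.of_forall fun t => ((measurable_id.const_mul t).exp).aestronglyMeasurable)
    (hInt t₀)
    ((measurable_id.mul (measurable_id.const_mul t₀).exp).aestronglyMeasurable)
    (Eventually.of_forall fun a => ?_) hbint
    (Eventually.of_forall fun a t _ => ?_)
  · exact key
  · intro t ht
    have h1 : |a| ≤ exp |a| := by
      have := Real.add_one_le_exp |a|; have := abs_nonneg a; linarith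
    have htb : |t| ≤ |t₀| + 1 := by
      have h2 := abs_sub_abs_le_abs_sub t t₀
      have h3 : |t - t₀| < 1 := by simpa [Real.dist_eq] using mem_ball.mp ht
      linarith
    have h2 : t * a ≤ (|t₀| + 1) * |a| := by
      have hta : t * a ≤ |t| * |a| := (le_abs_self _).trans (abs_mul t a).le
      nlinarith [abs_nonneg a]
    rw [Real.norm_eq_abs, abs_mul, Real.abs_exp]
    have e1 := exp_pos (c * a); have e2 := exp_pos (-c * a)
    calc |a| * exp (t * a) ≤ exp |a| * exp ((|t₀| + 1) * |a|) :=
          mul_le_mul h1 (exp_le_exp.2 h2) (exp_pos _).le (exp_pos _).le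
      _ = exp (c * |a|) := by rw [← exp_add, hc]; ring_nf
      _ ≤ exp (c * a) + exp (-c * a) := by
          rcases abs_cases a with ⟨ha, _⟩ | ⟨ha, _⟩
          · rw [ha]; linarith
          · rw [ha, show c * -a = -c * a by ring]; linarith
  · simpa [mul_comm] using ((hasDerivAt_id t).const_mul a).exp

theorem stmt3 (μ : Measure ℝ) [IsProbabilityMeasure μ]
    (heven : μ.map (fun x => -x) = μ)
    (hnd : 0 < ProbabilityTheory.variance id μ)
    (hmgf : ∀ t : ℝ, 0 ≤ t → Integrable (fun s => exp (t * s)) μ)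
    (x y : ℝ) (hx : 0 < x) (hxy : x < y) (hy : 0 < μ (Ioi y)) :
    ∃ t ∈ Ioo (0:ℝ) ((-log ((μ (Ici y)).toReal)) / (y - x)),
      (∀ s ∈ Ici (0:ℝ),
        s * x - log (∫ u, exp (s * u) ∂μ) ≤ t * x - log (∫ u, exp (t * u) ∂μ)) ∧
      deriv (fun s => log (∫ u, exp (s * u) ∂μ)) t = x := by
  -- integrability for all t
  have hInt : ∀ t : ℝ, Integrable (fun s => exp (t * s)) μ := by
    intro t
    rcases le_or_gt 0 t with h | h
    · exact hmgf t h
    · have h1 : Integrable (fun s => exp (-t * s)) μ := hmgf (-t) (by linarith)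
      have h2 : Integrable (fun s => exp (-t * s)) (μ.map (fun x => -x)) := by
        rw [heven]; exact h1
      have hm : Measurable fun s : ℝ => exp (-t * s) := (measurable_id.const_mul (-t)).exp
      rw [integrable_map_measure hm.aestronglyMeasurable measurable_neg.aemeasurable] at h2
      simpa [Function.comp_def] using h2
  set F : ℝ → ℝ := fun t => ∫ u, exp (t * u) ∂μ with hFdef
  set G : ℝ → ℝ := fun t => ∫ u, u * exp (t * u) ∂μ with hGdef
  have hFpos : ∀ t, 0 < F t := by
    intro t
    have : F t = ProbabilityTheory.mgf id μ t := by
      simp [ProbabilityTheory.mgf, hFdef]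
    rw [this]
    exact ProbabilityTheory.mgf_pos (by simpa [ProbabilityTheory.mgf] using hInt t)
  have hFderiv : ∀ t, HasDerivAt F (G t) t := fun t => (auxDeriv μ hInt t).2
  set Λ : ℝ → ℝ := fun t => log (F t) with hΛdef
  have hΛderiv : ∀ t, HasDerivAt Λ (G t / F t) t := fun t => (hFderiv t).log (hFpos t).ne'
  -- F 0 = 1, G 0 = 0
  have hF0 : F 0 = 1 := by simp [hFdef]
  have hΛ0 : Λ 0 = 0 := by simp [hΛdef, hF0]
  have hmean : ∫ u, u ∂μ = 0 := by
    have h1 : ∫ u, u ∂(μ.map (fun x : ℝ => -x)) = ∫ u, -u ∂μ :=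
      integral_map measurable_neg.aemeasurable measurable_id.aestronglyMeasurable
    rw [heven, integral_neg] at h1
    linarith
  have hG0 : G 0 = 0 := by simpa [hGdef] using hmean
  -- q and its derivative
  set q : ℝ → ℝ := fun s => s * x - Λ s with hqdef
  have hqderiv : ∀ t, HasDerivAt q (x - G t / F t) t := by
    intro t
    have h := ((hasDerivAt_id' t).mul_const x).sub (hΛderiv t); rw [one_mul] at h; exact h
  have hqcont : Continuous q := by
    have : Differentiable ℝ q := fun t => (hqderiv t).differentiableAt
    exact this.continuous
  have hq0 : q 0 = 0 := by simp [hqdef, hΛ0]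
  -- constants
  set P : ℝ := (μ (Ici y)).toReal with hPdef
  have hP0 : 0 < P := ENNReal.toReal_pos (by
      have : 0 < μ (Ici y) := lt_of_lt_of_le hy (measure_mono Ioi_subset_Ici_self)
      exact this.ne') (measure_ne_top μ _)
  have hy0 : 0 < y := lt_trans hx hxy
  have hPhalf : P ≤ 1 / 2 := by
    have hsymm : μ (Iic (-y)) = μ (Ici y) := by
      conv_lhs => rw [← heven]
      rw [Measure.map_apply measurable_neg measurableSet_Iic]
      congr 1
      ext u
      simp only [mem_preimage, mem_Iic, mem_Ici]
      constructor <;> intro h <;> linarith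
    have hdisj : Disjoint (Ici y) (Iic (-y)) := by
      rw [Set.disjoint_left]
      intro u hu hu'
      simp only [mem_Ici] at hu
      simp only [mem_Iic] at hu'
      linarith
    have hsum : μ (Ici y) + μ (Iic (-y)) ≤ 1 := by
      rw [← measure_union hdisj measurableSet_Iic]
      exact (measure_mono (subset_univ _)).trans_eq measure_univ
    rw [hsymm] at hsum
    have h2 : (μ (Ici y)).toReal + (μ (Ici y)).toReal ≤ 1 := by
      rw [← ENNReal.toReal_add (measure_ne_top μ _) (measure_ne_top μ _)]
      have := ENNReal.toReal_mono (by norm_num) hsum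
      simpa using this
    rw [hPdef]; linarith
  set m : ℝ := -log P with hmdef
  have hm : 0 < m := by
    have : log P < 0 := log_neg hP0 (lt_of_le_of_lt hPhalf (by norm_num))
    rw [hmdef]; linarith
  have hyx : 0 < y - x := by linarith
  set M : ℝ := m / (y - x) with hMdef
  have hM : 0 < M := div_pos hm hyx
  -- Markov bound: q s ≤ m - s * (y - x) for s ≥ 0
  have hmarkov : ∀ s : ℝ, 0 ≤ s → q s ≤ m - s * (y - x) := by
    intro s hs
    have hmk := mul_meas_ge_le_integral_of_nonneg (μ := μ) (f := fun u => exp (s * u))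
      (Eventually.of_forall fun u => (exp_pos _).le) (hInt s) (exp (s * y))
    have hsub : Ici y ⊆ {u : ℝ | exp (s * y) ≤ exp (s * u)} := by
      intro u hu
      simp only [mem_setOf_eq, exp_le_exp]
      exact mul_le_mul_of_nonneg_left hu hs
    have hms : P ≤ (μ {u : ℝ | exp (s * y) ≤ exp (s * u)}).toReal :=
      ENNReal.toReal_mono (measure_ne_top μ _) (measure_mono hsub)
    have hFs : exp (s * y) * P ≤ F s :=
      le_trans (mul_le_mul_of_nonneg_left hms (exp_pos _).le) hmk
    have hlog : s * y + log P ≤ Λ s := by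
      have h1 : log (exp (s * y) * P) ≤ log (F s) :=
        Real.log_le_log (by positivity) hFs
      rwa [Real.log_mul (exp_pos _).ne' hP0.ne', Real.log_exp] at h1
    have : q s = s * x - Λ s := rfl
    rw [this, hmdef]
    nlinarith [hlog]
  -- find s₀ ∈ Ioo 0 M with q s₀ > 0
  have hq0' : HasDerivAt q x 0 := by
    have := hqderiv 0
    rwa [hG0, zero_div, sub_zero] at this
  have hslope : Tendsto (slope q 0) (𝓝[>] (0:ℝ)) (𝓝 x) :=
    (hasDerivAt_iff_tendsto_slope.mp hq0').mono_left
      (nhdsWithin_mono 0 fun u hu => ne_of_gt hu)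
  have hev : ∀ᶠ s in 𝓝[>] (0:ℝ), 0 < slope q 0 s :=
    hslope.eventually (eventually_gt_nhds hx)
  have hIoo : Ioo (0:ℝ) M ∈ 𝓝[>] (0:ℝ) := Ioo_mem_nhdsGT_of_mem ⟨le_refl 0, hM⟩
  obtain ⟨s₀, hs₀pos, hs₀mem⟩ := (hev.and (eventually_of_mem hIoo fun s hs => hs)).exists
  have hqs₀ : 0 < q s₀ := by
    have h1 : slope q 0 s₀ = q s₀ / s₀ := by simp [slope_def_field, hq0]
    rw [h1] at hs₀pos
    have h0 := hs₀mem.1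
    have h2 : 0 < q s₀ / s₀ * s₀ := mul_pos hs₀pos h0
    rwa [div_mul_cancel₀ _ h0.ne'] at h2
  -- max on [0, M]
  obtain ⟨t, htmem, htmax⟩ := isCompact_Icc.exists_isMaxOn (nonempty_Icc.mpr hM.le)
    (hqcont.continuousOn : ContinuousOn q (Icc 0 M))
  have hqtpos : 0 < q t := lt_of_lt_of_le hqs₀ (htmax ⟨hs₀mem.1.le, hs₀mem.2.le⟩)
  have hMm : M * (y - x) = m := div_mul_cancel₀ m hyx.ne'
  have htne0 : t ≠ 0 := by
    intro h; rw [h, hq0] at hqtpos; exact lt_irrefl 0 hqtpos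
  have htneM : t ≠ M := by
    intro h
    have := hmarkov M hM.le
    rw [hMm] at this
    rw [h] at hqtpos
    linarith
  have htIoo : t ∈ Ioo 0 M :=
    ⟨lt_of_le_of_ne htmem.1 (Ne.symm htne0), lt_of_le_of_ne htmem.2 htneM⟩
  -- global max on Ici 0
  have hglobal : ∀ s ∈ Ici (0:ℝ), q s ≤ q t := by
    intro s hs
    rcases le_or_gt s M with h | h
    · exact htmax ⟨hs, h⟩
    · have h1 := hmarkov s (le_trans hM.le h.le)
      have h2 : m - s * (y - x) ≤ 0 := by nlinarith
      linarith
  -- local max ⇒ derivative zero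
  have hloc : IsLocalMax q t := by
    have hmem : Ioo (0:ℝ) M ∈ 𝓝 t := Ioo_mem_nhds htIoo.1 htIoo.2
    exact eventually_of_mem hmem fun s hs => htmax ⟨hs.1.le, hs.2.le⟩
  have hderiv0 : x - G t / F t = 0 := hloc.hasDerivAt_eq_zero (hqderiv t)
  refine ⟨t, htIoo, fun s hs => hglobal s hs, ?_⟩
  have hd := (hΛderiv t).deriv
  rw [hd]
  linarith
end

section
/- Let μ be an even Borel probability measure on ℝ, let x* = sup{x : μ([x,∞)) > 0}, I = (-x*, x*), and let Λ_μ*(x) = sup_{t∈ℝ}(tx - ln ∫ e^{ts} dμ(s)) be the Cramér transform. Then ∫_I e^{Λ_μ*(x)/2} dμ(x) ≤ 4. In particular Λ_μ* has finite moments of all orders with respect to μ. -/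
open MeasureTheory Filter Set Real
open scoped ENNReal

lemma negPreimage (μ : Measure ℝ) (heven : μ.map (fun x : ℝ => -x) = μ)
    {A : Set ℝ} (hA : MeasurableSet A) : μ ((fun x : ℝ => -x) ⁻¹' A) = μ A := by
  conv_rhs => rw [← heven]
  rw [Measure.map_apply measurable_neg hA]

lemma evenInt (μ : Measure ℝ) (heven : μ.map (fun x : ℝ => -x) = μ) (t : ℝ) :
    ∫ s, exp (-t * s) ∂μ = ∫ s, exp (t * s) ∂μ := by
  conv_rhs => rw [← heven]
  rw [integral_map measurable_neg.aemeasurable (Continuous.aestronglyMeasurable (by continuity))]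
  simp [neg_mul, mul_neg]

lemma evenIntegrable (μ : Measure ℝ) (heven : μ.map (fun x : ℝ => -x) = μ) (t : ℝ)
    (h : Integrable (fun s => exp (t * s)) μ) :
    Integrable (fun s => exp (-t * s)) μ := by
  have h1 : Integrable (fun s => exp (t * s)) (μ.map (fun x : ℝ => -x)) := by
    rw [heven]; exact h
  have h2 := (integrable_map_measure (Continuous.aestronglyMeasurable (by continuity)) measurable_neg.aemeasurable).1 h1
  have : ((fun s => rexp (t * s)) ∘ Neg.neg) = fun s => exp (-t * s) := by
    ext s; simp [Function.comp, neg_mul, mul_neg]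
  rwa [this] at h2

lemma keyBound (μ : Measure ℝ) [IsProbabilityMeasure μ]
    (heven : μ.map (fun x : ℝ => -x) = μ) {s : ℝ} (hs : 0 < s) (hs2 : s ≤ 1 / 2) :
    μ {x : ℝ | μ (Ici |x|) < ENNReal.ofReal s} ≤ ENNReal.ofReal (2 * s) := by
  set B : Set ℝ := {u : ℝ | μ (Ici u) < ENNReal.ofReal s} with hBdef
  rcases eq_empty_or_nonempty B with hBe | hBne
  · have hA : {x : ℝ | μ (Ici |x|) < ENNReal.ofReal s} = ∅ := by
      ext x
      simp only [mem_setOf_eq, mem_empty_iff_false, iff_false]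
      intro h
      exact absurd (show |x| ∈ B from h) (by simp [hBe])
    simp [hA]
  -- μ (Ici 0) ≥ ofReal s
  have hIic0 : μ (Iic 0) = μ (Ici 0) := by
    have h := negPreimage μ heven (measurableSet_Ici (a := (0:ℝ)))
    have h2 : (fun x : ℝ => -x) ⁻¹' Ici 0 = Iic 0 := by
      ext y; simp [neg_nonneg]
    rwa [h2] at h
  have h0 : ENNReal.ofReal s ≤ μ (Ici 0) := by
    by_contra h
    push_neg at h
    have h1 : μ univ ≤ μ (Iic 0) + μ (Ici 0) := by
      rw [← Iic_union_Ici (a := (0:ℝ))]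
      exact measure_union_le _ _
    rw [measure_univ, hIic0] at h1
    have h2 : μ (Ici 0) + μ (Ici 0) < ENNReal.ofReal s + ENNReal.ofReal s :=
      ENNReal.add_lt_add h h
    have h3 : ENNReal.ofReal s + ENNReal.ofReal s ≤ 1 := by
      rw [← ENNReal.ofReal_add hs.le hs.le]
      calc ENNReal.ofReal (s + s) ≤ ENNReal.ofReal 1 := by
            apply ENNReal.ofReal_le_ofReal; linarith
        _ = 1 := ENNReal.ofReal_one
    exact absurd ((h1.trans_lt h2).trans_le h3) (lt_irrefl _)
  -- B is upward closed and contained in Ioi 0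
  have hup : ∀ u ∈ B, ∀ v, u ≤ v → v ∈ B := fun u hu v huv =>
    lt_of_le_of_lt (measure_mono (Ici_subset_Ici.2 huv)) hu
  have hBpos : ∀ u ∈ B, 0 < u := by
    intro u hu
    by_contra h
    push_neg at h
    exact absurd (lt_of_le_of_lt (le_trans h0 (measure_mono (Ici_subset_Ici.2 h))) hu)
      (lt_irrefl _)
  have hbdd : BddBelow B := ⟨0, fun u hu => (hBpos u hu).le⟩
  set a : ℝ := sInf B with hadef
  have hIoiB : Ioi a ⊆ B := by
    intro u hu
    obtain ⟨b, hbB, hb⟩ := (csInf_lt_iff hbdd hBne).1 hu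
    exact hup b hbB u hb.le
  have hBIci : B ⊆ Ici a := fun u hu => csInf_le hbdd hu
  have hIoi_le : μ (Ioi a) ≤ ENNReal.ofReal s := by
    have hU : Ioi a = ⋃ n : ℕ, Ici (a + (n + 1 : ℝ)⁻¹) := by
      ext x
      simp only [mem_Ioi, mem_iUnion, mem_Ici]
      constructor
      · intro hx
        obtain ⟨n, hn⟩ := exists_nat_one_div_lt (show 0 < x - a by linarith)
        exact ⟨n, by rw [one_div] at hn; linarith⟩
      · rintro ⟨n, hn⟩
        have : (0:ℝ) < (n + 1 : ℝ)⁻¹ := by positivity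
        linarith
    rw [hU, Directed.measure_iUnion]
    · apply iSup_le
      intro n
      have hp : (0:ℝ) < (n + 1 : ℝ)⁻¹ := by positivity
      have : a + (n + 1 : ℝ)⁻¹ ∈ B := hIoiB (by simp only [mem_Ioi]; linarith)
      exact this.le
    · have hmono : Monotone (fun n : ℕ => Ici (a + (n + 1 : ℝ)⁻¹)) := by
        intro m n hmn
        apply Ici_subset_Ici.2
        have h1 : (n + 1 : ℝ)⁻¹ ≤ (m + 1 : ℝ)⁻¹ := by
          apply inv_anti₀ (by positivity)
          have : (m:ℝ) ≤ n := by exact_mod_cast hmn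
          linarith
        linarith
      exact hmono.directed_le
  -- B is measurable with measure ≤ ofReal s
  have hfin : MeasurableSet B ∧ μ B ≤ ENNReal.ofReal s := by
    by_cases haB : a ∈ B
    · have hBeq : B = Ici a := subset_antisymm hBIci (fun u hu => hup a haB u hu)
      exact ⟨hBeq ▸ measurableSet_Ici, hBeq ▸ haB.le⟩
    · have hBeq : B = Ioi a := by
        apply subset_antisymm _ hIoiB
        intro u hu
        exact (show a < u from lt_of_le_of_ne (show a ≤ u from hBIci hu) (fun h => haB (h ▸ hu)))
      exact ⟨hBeq ▸ measurableSet_Ioi, hBeq ▸ hIoi_le⟩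
  obtain ⟨hBmeas, hμB⟩ := hfin
  -- the set is B ∪ -B
  have hAeq : {x : ℝ | μ (Ici |x|) < ENNReal.ofReal s} = B ∪ ((fun x : ℝ => -x) ⁻¹' B) := by
    ext x
    simp only [mem_setOf_eq, mem_union, mem_preimage]
    constructor
    · intro h
      rcases le_total 0 x with hx | hx
      · left; rwa [abs_of_nonneg hx] at h
      · right; rwa [abs_of_nonpos hx] at h
    · rintro (h | h)
      · rwa [abs_of_pos (hBpos x h)]
      · have : 0 < -x := hBpos _ h
        rwa [abs_of_neg (by linarith)]
  rw [hAeq]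
  calc μ (B ∪ ((fun x : ℝ => -x) ⁻¹' B)) ≤ μ B + μ ((fun x : ℝ => -x) ⁻¹' B) :=
        measure_union_le _ _
    _ = μ B + μ B := by rw [negPreimage μ heven hBmeas]
    _ ≤ ENNReal.ofReal s + ENNReal.ofReal s := by gcongr
    _ = ENNReal.ofReal (2 * s) := by
        rw [← ENNReal.ofReal_add hs.le hs.le]; ring_nf

lemma chernoff (μ : Measure ℝ) [IsProbabilityMeasure μ]
    (heven : μ.map (fun x : ℝ => -x) = μ)
    (hInt : ∀ t : ℝ, Integrable (fun s => exp (t * s)) μ)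
    {x : ℝ} (hx : 0 < μ (Ici |x|)) :
    (⨆ t : ℝ, (t * x - log (∫ s, exp (t * s) ∂μ))) ≤ -log (μ (Ici |x|)).toReal := by
  set G : ℝ := (μ (Ici |x|)).toReal with hGdef
  have hGpos : 0 < G := ENNReal.toReal_pos hx.ne' (measure_ne_top μ _)
  apply ciSup_le
  intro t
  have habs : ∫ s, exp (t * s) ∂μ = ∫ s, exp (|t| * s) ∂μ := by
    rcases abs_choice t with h | h
    · rw [h]
    · conv_lhs => rw [show t = -|t| by linarith [h]]
      exact (evenInt μ heven |t|).symm ▸ (by rw [← evenInt μ heven |t|])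
  have key : G * exp (|t| * |x|) ≤ ∫ s, exp (|t| * s) ∂μ := by
    have h1 : ∫ s in Ici |x|, exp (|t| * s) ∂μ ≤ ∫ s, exp (|t| * s) ∂μ :=
      setIntegral_le_integral (hInt |t|) (Eventually.of_forall fun s => (exp_pos _).le)
    have h2 : exp (|t| * |x|) * (μ (Ici |x|)).toReal ≤ ∫ s in Ici |x|, exp (|t| * s) ∂μ := by
      apply setIntegral_ge_of_const_le_real measurableSet_Ici (measure_ne_top μ _)
      · intro s hs
        exact exp_le_exp.2 (mul_le_mul_of_nonneg_left hs (abs_nonneg t))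
      · exact (hInt |t|).integrableOn
    nlinarith [h1, h2]
  have hIpos : 0 < ∫ s, exp (|t| * s) ∂μ :=
    lt_of_lt_of_le (by positivity) key
  have hlog : log G + |t| * |x| ≤ log (∫ s, exp (|t| * s) ∂μ) := by
    have := Real.log_le_log (by positivity) key
    rwa [Real.log_mul hGpos.ne' (exp_pos _).ne', Real.log_exp] at this
  have htx : t * x ≤ |t| * |x| := le_trans (le_abs_self _) (abs_mul t x).le
  rw [habs]
  linarith

theorem stmt6 (μ : Measure ℝ) [IsProbabilityMeasure μ]
    (heven : μ.map (fun x => -x) = μ) :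
    ∫⁻ x in {x : ℝ | 0 < μ (Ioi |x|)},
      ENNReal.ofReal (exp ((⨆ t : ℝ, (t * x - log (∫ s, exp (t * s) ∂μ))) / 2)) ∂μ
      ≤ 4 := by
  by_cases hInt : ∀ t : ℝ, Integrable (fun s => exp (t * s)) μ
  · -- all exponential moments exist: Chernoff + layer cake
    set f : ℝ → ℝ := fun x => (μ (Ici |x|)).toReal ^ (-(1/2) : ℝ) with hfdef
    have hanti : Antitone (fun u : ℝ => μ (Ici u)) := fun u v huv =>
      measure_mono (Ici_subset_Ici.2 huv)
    have hm1 : Measurable fun x : ℝ => μ (Ici |x|) := hanti.measurable.comp measurable_abs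
    have hmf : Measurable f :=
      (show Measurable fun y : ℝ => y ^ (-(1/2):ℝ) by fun_prop).comp
        (ENNReal.measurable_toReal.comp hm1)
    have hS : MeasurableSet {x : ℝ | 0 < μ (Ioi |x|)} := by
      have hanti2 : Antitone (fun u : ℝ => μ (Ioi u)) := fun u v huv =>
        measure_mono (Ioi_subset_Ioi huv)
      exact measurableSet_lt measurable_const (hanti2.measurable.comp measurable_abs)
    have hsq2pos : (0:ℝ) < Real.sqrt 2 := Real.sqrt_pos.2 (by norm_num)
    calc ∫⁻ x in {x : ℝ | 0 < μ (Ioi |x|)},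
          ENNReal.ofReal (exp ((⨆ t : ℝ, (t * x - log (∫ s, exp (t * s) ∂μ))) / 2)) ∂μ
        ≤ ∫⁻ x in {x : ℝ | 0 < μ (Ioi |x|)}, ENNReal.ofReal (f x) ∂μ := by
          apply setLIntegral_mono' hS
          intro x hx
          have hx' : 0 < μ (Ici |x|) := hx.trans_le (measure_mono Ioi_subset_Ici_self)
          have hGpos : 0 < (μ (Ici |x|)).toReal :=
            ENNReal.toReal_pos hx'.ne' (measure_ne_top μ _)
          apply ENNReal.ofReal_le_ofReal
          rw [hfdef]
          simp only []
          rw [Real.rpow_def_of_pos hGpos]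
          apply exp_le_exp.2
          have := chernoff μ heven hInt hx'
          nlinarith [this]
      _ ≤ ∫⁻ x, ENNReal.ofReal (f x) ∂μ := setLIntegral_le_lintegral _ _
      _ = ∫⁻ t in Ioi (0:ℝ), μ {a : ℝ | t < f a} :=
          lintegral_eq_lintegral_meas_lt μ
            (Eventually.of_forall fun x => Real.rpow_nonneg ENNReal.toReal_nonneg _)
            hmf.aemeasurable
      _ ≤ ∫⁻ t in Ioi (0:ℝ),
            (if t ≤ Real.sqrt 2 then 1 else ENNReal.ofReal (2 * t ^ (-(2:ℝ)))) := by
          apply setLIntegral_mono' measurableSet_Ioi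
          intro t ht
          rw [mem_Ioi] at ht
          by_cases htsq : t ≤ Real.sqrt 2
          · rw [if_pos htsq]; exact prob_le_one
          · rw [if_neg htsq]
            push_neg at htsq
            have hs : 0 < t ^ (-(2:ℝ)) := Real.rpow_pos_of_pos ht _
            have hs2 : t ^ (-(2:ℝ)) ≤ 1 / 2 := by
              have h4 : (2:ℝ) ≤ t ^ (2:ℕ) := by
                nlinarith [Real.sq_sqrt (show (0:ℝ) ≤ 2 by norm_num)]
              rw [show (-(2:ℝ)) = -((2:ℕ):ℝ) by norm_num, Real.rpow_neg ht.le,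
                Real.rpow_natCast]
              calc (t ^ (2:ℕ))⁻¹ ≤ (2:ℝ)⁻¹ := by
                    apply inv_anti₀ (by norm_num) h4
                _ = 1 / 2 := by norm_num
            refine le_trans (measure_mono ?_) (keyBound μ heven hs hs2)
            intro a ha
            rw [mem_setOf_eq] at ha ⊢
            have hGa : 0 < (μ (Ici |a|)).toReal := by
              rcases (ENNReal.toReal_nonneg (a := μ (Ici |a|))).lt_or_eq with h | h
              · exact h
              · exfalso
                rw [hfdef] at ha
                simp only [← h, Real.zero_rpow (show (-(1/2):ℝ) ≠ 0 by norm_num)] at ha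
                linarith
            have h3 : (μ (Ici |a|)).toReal < t ^ (-(2:ℝ)) := by
              have e1 : ((μ (Ici |a|)).toReal ^ (-(1/2):ℝ)) ^ (-(2:ℝ)) = (μ (Ici |a|)).toReal := by
                rw [← Real.rpow_mul ENNReal.toReal_nonneg]
                norm_num
              calc (μ (Ici |a|)).toReal = ((μ (Ici |a|)).toReal ^ (-(1/2):ℝ)) ^ (-(2:ℝ)) := e1.symm
                _ < t ^ (-(2:ℝ)) := Real.rpow_lt_rpow_of_neg ht ha (by norm_num)
            calc μ (Ici |a|) = ENNReal.ofReal (μ (Ici |a|)).toReal :=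
                  (ENNReal.ofReal_toReal (measure_ne_top μ _)).symm
              _ < ENNReal.ofReal (t ^ (-(2:ℝ))) := (ENNReal.ofReal_lt_ofReal_iff hs).2 h3
      _ ≤ 4 := by
          rw [← Ioc_union_Ioi_eq_Ioi hsq2pos.le,
            lintegral_union measurableSet_Ioi (Ioc_disjoint_Ioi le_rfl)]
          have hpiece1 : ∫⁻ t in Ioc (0:ℝ) (Real.sqrt 2),
              (if t ≤ Real.sqrt 2 then 1 else ENNReal.ofReal (2 * t ^ (-(2:ℝ)))) = ENNReal.ofReal (Real.sqrt 2) := by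
            rw [setLIntegral_congr_fun measurableSet_Ioc
              (show EqOn (fun t : ℝ => if t ≤ Real.sqrt 2 then (1:ℝ≥0∞) else ENNReal.ofReal (2 * t ^ (-(2:ℝ))))
                (fun _ => 1) (Ioc (0:ℝ) (Real.sqrt 2)) from fun t ht => if_pos ht.2)]
            rw [setLIntegral_one, Real.volume_Ioc]
            norm_num
          have hpiece2 : ∫⁻ t in Ioi (Real.sqrt 2),
              (if t ≤ Real.sqrt 2 then 1 else ENNReal.ofReal (2 * t ^ (-(2:ℝ)))) =
              ENNReal.ofReal (2 * (Real.sqrt 2)⁻¹) := by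
            rw [setLIntegral_congr_fun measurableSet_Ioi
              (show EqOn (fun t : ℝ => if t ≤ Real.sqrt 2 then (1:ℝ≥0∞) else ENNReal.ofReal (2 * t ^ (-(2:ℝ))))
                (fun t => ENNReal.ofReal (2 * t ^ (-(2:ℝ)))) (Ioi (Real.sqrt 2))
                from fun t ht => if_neg (not_le.2 ht))]
            have hint : IntegrableOn (fun t : ℝ => 2 * t ^ (-(2:ℝ))) (Ioi (Real.sqrt 2)) :=
              (integrableOn_Ioi_rpow_of_lt (by norm_num) hsq2pos).const_mul 2
            rw [← ofReal_integral_eq_lintegral_ofReal hint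
              ((ae_restrict_iff' measurableSet_Ioi).2 (ae_of_all _ (fun t ht => by
                have : 0 < t := hsq2pos.trans ht
                positivity)))]
            congr 1
            rw [MeasureTheory.integral_const_mul, integral_Ioi_rpow_of_lt (by norm_num) hsq2pos]
            rw [show (-(2:ℝ)) + 1 = -1 by norm_num, Real.rpow_neg_one]
            field_simp
          rw [hpiece1, hpiece2, ← ENNReal.ofReal_add (Real.sqrt_nonneg 2) (by positivity)]
          have h2 : Real.sqrt 2 * Real.sqrt 2 = 2 := Real.mul_self_sqrt (by norm_num)
          have h3 : 2 * (Real.sqrt 2)⁻¹ = Real.sqrt 2 := by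
            field_simp
            rw [sq, h2]
          have h4 : Real.sqrt 2 ≤ 2 := by nlinarith
          calc ENNReal.ofReal (Real.sqrt 2 + 2 * (Real.sqrt 2)⁻¹)
              ≤ ENNReal.ofReal 4 := ENNReal.ofReal_le_ofReal (by rw [h3]; linarith)
            _ = 4 := by norm_num
  · -- some exponential moment is infinite: the Cramer transform is `0` (junk values)
    push_neg at hInt
    obtain ⟨t₀, ht₀⟩ := hInt
    have ht₀ne : t₀ ≠ 0 := by
      rintro rfl
      exact ht₀ (by simpa using integrable_const (1 : ℝ) (μ := μ))
    set t₁ : ℝ := |t₀| with ht₁def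
    have ht₁pos : 0 < t₁ := abs_pos.2 ht₀ne
    have ht₁ : ¬ Integrable (fun s => exp (t₁ * s)) μ := by
      intro h
      rcases abs_choice t₀ with he | he
      · exact ht₀ (he ▸ h)
      · apply ht₀
        have h2 := evenIntegrable μ heven t₁ h
        have h3 : -t₁ = t₀ := by rw [ht₁def, he]; ring
        rwa [h3] at h2
    have hmono : ∀ t : ℝ, t₁ ≤ t → ¬ Integrable (fun s => exp (t * s)) μ := by
      intro t ht hI
      apply ht₁
      refine Integrable.mono' (hI.add (integrable_const 1))
        (Continuous.aestronglyMeasurable (by continuity))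
        (Eventually.of_forall fun s => ?_)
      rw [Real.norm_eq_abs, abs_of_pos (exp_pos _)]
      simp only [Pi.add_apply]
      rcases le_or_gt 0 s with hs | hs
      · have : exp (t₁ * s) ≤ exp (t * s) := exp_le_exp.2 (mul_le_mul_of_nonneg_right ht hs)
        linarith
      · have h1 : t₁ * s ≤ 0 := mul_nonpos_of_nonneg_of_nonpos ht₁pos.le hs.le
        have : exp (t₁ * s) ≤ exp 0 := exp_le_exp.2 h1
        rw [Real.exp_zero] at this
        have := exp_pos (t * s)
        linarith
    have hneg : ∀ t : ℝ, t ≤ -t₁ → ¬ Integrable (fun s => exp (t * s)) μ := by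
      intro t ht hI
      exact hmono (-t) (by linarith) (by simpa using evenIntegrable μ heven t hI)
    have hΛnonneg : ∀ t : ℝ, 0 ≤ log (∫ s, exp (t * s) ∂μ) := by
      intro t
      by_cases h : Integrable (fun s => exp (t * s)) μ
      · apply Real.log_nonneg
        have hptw : ∀ s : ℝ, (2 : ℝ) ≤ exp (t * s) + exp (-t * s) := by
          intro s
          have h1 : exp (t * s) * exp (-t * s) = 1 := by
            rw [← Real.exp_add]; ring_nf; exact Real.exp_zero
          nlinarith [sq_nonneg (exp (t * s) - 1), exp_pos (t * s), exp_pos (-t * s)]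
        have h2 : ∫ s, (2:ℝ) ∂μ ≤ ∫ s, (exp (t * s) + exp (-t * s)) ∂μ :=
          integral_mono (integrable_const 2) (h.add (evenIntegrable μ heven t h)) hptw
        rw [integral_const, probReal_univ, smul_eq_mul, one_mul] at h2
        rw [integral_add h (evenIntegrable μ heven t h), evenInt μ heven t] at h2
        linarith
      · rw [integral_undef h, Real.log_zero]
    have hsup : ∀ x : ℝ, (⨆ t : ℝ, (t * x - log (∫ s, exp (t * s) ∂μ))) ≤ 0 := by
      intro x
      rcases eq_or_ne x 0 with rfl | hx
      · apply ciSup_le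
        intro t
        have := hΛnonneg t
        simp only [mul_zero, zero_sub]
        linarith
      · have hnb : ¬ BddAbove (range fun t : ℝ => t * x - log (∫ s, exp (t * s) ∂μ)) := by
          rw [not_bddAbove_iff]
          intro M
          rcases hx.lt_or_gt with hxneg | hxpos
          · refine ⟨(min (-t₁) ((M + 1) / x)) * x - log (∫ s, exp ((min (-t₁) ((M + 1) / x)) * s) ∂μ),
              ⟨min (-t₁) ((M + 1) / x), rfl⟩, ?_⟩
            rw [integral_undef (hneg _ (min_le_left _ _)), Real.log_zero, sub_zero]
            have h1 : min (-t₁) ((M + 1) / x) ≤ (M + 1) / x := min_le_right _ _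
            have h2 : (M + 1) / x * x = M + 1 := div_mul_cancel₀ _ hx
            nlinarith [mul_le_mul_of_nonpos_right h1 hxneg.le]
          · refine ⟨(max t₁ ((M + 1) / x)) * x - log (∫ s, exp ((max t₁ ((M + 1) / x)) * s) ∂μ),
              ⟨max t₁ ((M + 1) / x), rfl⟩, ?_⟩
            rw [integral_undef (hmono _ (le_max_left _ _)), Real.log_zero, sub_zero]
            have h1 : (M + 1) / x ≤ max t₁ ((M + 1) / x) := le_max_right _ _
            have h2 : (M + 1) / x * x = M + 1 := div_mul_cancel₀ _ hx
            nlinarith [mul_le_mul_of_nonneg_right h1 hxpos.le]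
        rw [Real.iSup_of_not_bddAbove hnb]
    calc ∫⁻ x in {x : ℝ | 0 < μ (Ioi |x|)},
          ENNReal.ofReal (exp ((⨆ t : ℝ, (t * x - log (∫ s, exp (t * s) ∂μ))) / 2)) ∂μ
        ≤ ∫⁻ _ in {x : ℝ | 0 < μ (Ioi |x|)}, 1 ∂μ := by
          apply lintegral_mono
          intro x
          calc ENNReal.ofReal (exp ((⨆ t : ℝ, (t * x - log (∫ s, exp (t * s) ∂μ))) / 2))
              ≤ ENNReal.ofReal (exp 0) := by
                apply ENNReal.ofReal_le_ofReal
                apply exp_le_exp.2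
                linarith [hsup x]
            _ = 1 := by rw [Real.exp_zero, ENNReal.ofReal_one]
      _ = μ {x : ℝ | 0 < μ (Ioi |x|)} := setLIntegral_one _
      _ ≤ 1 := prob_le_one
      _ ≤ 4 := by norm_num
end

section
/- Let μ_n be a Borel probability measure on ℝⁿ, let X⃗_1,…,X⃗_N be i.i.d. with distribution μ_n, and let K_N = conv{X⃗_1,…,X⃗_N}. Then for every r > 0, E[μ_n(K_N)] ≤ μ_n(B_r) + N e^{-r}, where B_r = {x : Λ_{μ_n}*(x) ≤ r}. -/
open MeasureTheory Filter Set Real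
open scoped ENNReal

noncomputable def dprod {n : ℕ} (ξ x : Fin n → ℝ) : ℝ := ∑ i, ξ i * x i

lemma dprod_continuous {n : ℕ} (y : Fin n → ℝ) : Continuous fun ξ => dprod ξ y := by
  unfold dprod
  exact continuous_finset_sum _ fun i _ => (continuous_apply i).mul continuous_const

lemma dprod_continuous' {n : ℕ} (ξ : Fin n → ℝ) : Continuous fun y => dprod ξ y := by
  unfold dprod
  exact continuous_finset_sum _ fun i _ => continuous_const.mul (continuous_apply i)

lemma dprod_isLinear {n : ℕ} (ξ : Fin n → ℝ) : IsLinearMap ℝ fun y => dprod ξ y := by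
  constructor
  · intro a b; unfold dprod; rw [← Finset.sum_add_distrib]; congr 1; ext i; ring_nf
    simp [Pi.add_apply, mul_add]
  · intro c a; unfold dprod
    simp only [Pi.smul_apply, smul_eq_mul, Finset.mul_sum]
    congr 1; ext i; ring

/-- Half-space lemma: if `x` is in the convex hull of the range of `X`, then for every
direction `ξ` some point `X i` is at least as far as `x`. -/
lemma halfspace_mem {n N : ℕ} (X : Fin N → Fin n → ℝ) (x : Fin n → ℝ)
    (hx : x ∈ convexHull ℝ (range X)) (ξ : Fin n → ℝ) :
    ∃ i, dprod ξ x ≤ dprod ξ (X i) := by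
  rcases isEmpty_or_nonempty (Fin N) with hN | hN
  · rw [range_eq_empty, convexHull_empty] at hx; exact absurd hx (notMem_empty x)
  · set c := Finset.univ.sup' Finset.univ_nonempty (fun i => dprod ξ (X i)) with hc
    have hconv : convexHull ℝ (range X) ⊆ {y | dprod ξ y ≤ c} := by
      apply convexHull_min
      · rintro y ⟨i, rfl⟩
        exact Finset.le_sup' (fun i => dprod ξ (X i)) (Finset.mem_univ i)
      · exact convex_halfSpace_le (dprod_isLinear ξ) c
    obtain ⟨i, -, hi⟩ := Finset.exists_mem_eq_sup' Finset.univ_nonempty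
      (fun i => dprod ξ (X i))
    exact ⟨i, (hconv hx).trans_eq (hc ▸ hi)⟩

/-- Chernoff bound for the half-space determined by a witness direction. -/
lemma chernoff_s10 {n : ℕ} (μ : Measure (Fin n → ℝ)) [IsProbabilityMeasure μ]
    (ξ x : Fin n → ℝ) (r : ℝ)
    (hint : Integrable (fun z => exp (dprod ξ z)) μ)
    (hgt : r < dprod ξ x - log (∫ z, exp (dprod ξ z) ∂μ)) :
    μ {y | dprod ξ x ≤ dprod ξ y} ≤ ENNReal.ofReal (exp (-r)) := by
  set M := ∫ z, exp (dprod ξ z) ∂μ with hM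
  have hMpos : 0 < M := integral_exp_pos hint
  set t := dprod ξ x with ht
  have hmeas : AEMeasurable (fun y => ENNReal.ofReal (exp (dprod ξ y))) μ :=
    (ENNReal.continuous_ofReal.comp
      (continuous_exp.comp (dprod_continuous' ξ))).measurable.aemeasurable
  have markov := mul_meas_ge_le_lintegral₀ hmeas (ENNReal.ofReal (exp t))
  have hset : {y | ENNReal.ofReal (exp t) ≤ ENNReal.ofReal (exp (dprod ξ y))}
      = {y | t ≤ dprod ξ y} := by
    ext y
    simp only [mem_setOf_eq, ENNReal.ofReal_le_ofReal_iff (exp_pos _).le, exp_le_exp]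
  rw [hset] at markov
  have hlint : ∫⁻ y, ENNReal.ofReal (exp (dprod ξ y)) ∂μ = ENNReal.ofReal M :=
    (ofReal_integral_eq_lintegral_ofReal hint
      (Filter.Eventually.of_forall fun y => (exp_pos _).le)).symm
  rw [hlint] at markov
  have hc0 : (ENNReal.ofReal (exp t)) ≠ 0 := by
    simp [ENNReal.ofReal_eq_zero, not_le, exp_pos]
  have hctop : (ENNReal.ofReal (exp t)) ≠ ⊤ := ENNReal.ofReal_ne_top
  have h1 : μ {y | t ≤ dprod ξ y} ≤ ENNReal.ofReal M / ENNReal.ofReal (exp t) :=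
    (ENNReal.le_div_iff_mul_le (Or.inl hc0) (Or.inl hctop)).2 (by rwa [mul_comm])
  refine h1.trans ?_
  rw [← ENNReal.ofReal_div_of_pos (exp_pos _)]
  apply ENNReal.ofReal_le_ofReal
  have : M / exp t = exp (log M - t) := by
    rw [exp_sub, exp_log hMpos]
  rw [this]
  exact exp_le_exp.2 (by linarith)

/-- If the Cramér transform at `x` exceeds `r > 0`, there is an *integrable* witness
direction. -/
lemma witness {n : ℕ} (μ : Measure (Fin n → ℝ)) [IsProbabilityMeasure μ]
    (x : Fin n → ℝ) (r : ℝ) (hr : 0 < r)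
    (hx : r < ⨆ ξ : Fin n → ℝ, (dprod ξ x - log (∫ z, exp (dprod ξ z) ∂μ))) :
    ∃ ξ, Integrable (fun z => exp (dprod ξ z)) μ ∧
      r < dprod ξ x - log (∫ z, exp (dprod ξ z) ∂μ) := by
  set f : (Fin n → ℝ) → ℝ := fun ξ => dprod ξ x - log (∫ z, exp (dprod ξ z) ∂μ) with hf
  have hbdd : BddAbove (range f) := by
    by_contra h
    rw [Real.iSup_of_not_bddAbove h] at hx
    linarith
  obtain ⟨ξ, hξ⟩ := exists_lt_of_lt_ciSup hx
  by_cases hint : Integrable (fun z => exp (dprod ξ z)) μ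
  · exact ⟨ξ, hint, hξ⟩
  exfalso
  have h0 : ∫ z, exp (dprod ξ z) ∂μ = 0 := integral_undef hint
  have hc : r < dprod ξ x := by
    simpa [hf, h0] using hξ
  have hscale : ∀ k : ℕ, ¬ Integrable (fun z => exp (dprod (((k : ℝ) + 1) • ξ) z)) μ := by
    intro k hk
    apply hint
    have hd : ∀ z, dprod (((k : ℝ) + 1) • ξ) z = ((k : ℝ) + 1) * dprod ξ z := by
      intro z; unfold dprod
      simp only [Pi.smul_apply, smul_eq_mul, Finset.mul_sum]
      congr 1; ext i; ring
    refine (hk.add (integrable_const 1)).mono ?_ ?_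
    · exact ((continuous_exp.comp (dprod_continuous' ξ))).aestronglyMeasurable
    · refine Filter.Eventually.of_forall fun z => ?_
      simp only [norm_eq_abs, Pi.add_apply]
      rw [abs_of_pos (exp_pos _), hd z, abs_of_pos (by positivity)]
      rcases le_or_gt 0 (dprod ξ z) with hz | hz
      · have : dprod ξ z ≤ ((k : ℝ) + 1) * dprod ξ z := by nlinarith
        nlinarith [exp_le_exp.2 this, exp_pos (((k : ℝ) + 1) * dprod ξ z)]
      · have h1 : exp (dprod ξ z) ≤ 1 := exp_le_one_iff.2 hz.le
        nlinarith [exp_pos (((k : ℝ) + 1) * dprod ξ z)]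
  obtain ⟨b, hb⟩ := hbdd
  obtain ⟨k, hk⟩ := exists_nat_gt (b / (dprod ξ x))
  have hcpos : 0 < dprod ξ x := lt_trans hr hc
  have hval : f (((k : ℝ) + 1) • ξ) = ((k : ℝ) + 1) * dprod ξ x := by
    have h0' : ∫ z, exp (dprod (((k : ℝ) + 1) • ξ) z) ∂μ = 0 := integral_undef (hscale k)
    have hd : dprod (((k : ℝ) + 1) • ξ) x = ((k : ℝ) + 1) * dprod ξ x := by
      unfold dprod
      simp only [Pi.smul_apply, smul_eq_mul, Finset.mul_sum]
      congr 1; ext i; ring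
    simp [hf, h0', hd]
  have hbk : f (((k : ℝ) + 1) • ξ) ≤ b := hb (mem_range_self _)
  rw [hval] at hbk
  have : b < ((k : ℝ) + 1) * dprod ξ x := by
    have h2 : b / dprod ξ x < (k : ℝ) + 1 := hk.trans (by linarith)
    calc b = (b / dprod ξ x) * dprod ξ x := by field_simp
    _ < ((k : ℝ) + 1) * dprod ξ x := by nlinarith
  linarith

/-- Joint measurability of the convex-hull membership set. -/
lemma convMeas {n N : ℕ} [Nonempty (Fin N)] :
    MeasurableSet {p : (Fin N → Fin n → ℝ) × (Fin n → ℝ) |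
      p.2 ∈ convexHull ℝ (range p.1)} := by
  obtain ⟨D, hDc, hDd⟩ := TopologicalSpace.exists_countable_dense (Fin n → ℝ)
  have hEq : {p : (Fin N → Fin n → ℝ) × (Fin n → ℝ) | p.2 ∈ convexHull ℝ (range p.1)}
      = ⋂ ξ ∈ D, ⋃ i : Fin N, {p : (Fin N → Fin n → ℝ) × (Fin n → ℝ) |
          dprod ξ p.2 ≤ dprod ξ (p.1 i)} := by
    ext ⟨X, x⟩
    simp only [mem_setOf_eq, mem_iInter, mem_iUnion]
    constructor
    · intro hx ξ _
      exact halfspace_mem X x hx ξ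
    · intro h
      by_contra hx
      have hcompact : IsCompact (convexHull ℝ (range X)) :=
        (Set.finite_range X).isCompact_convexHull ℝ
      obtain ⟨g, u, hgu, hgs⟩ := geometric_hahn_banach_closed_point
        (convex_convexHull ℝ (range X)) hcompact.isClosed hx
      set ξ₀ : Fin n → ℝ := fun j => g (fun j' => if j = j' then 1 else 0) with hξ₀
      have hrep : ∀ y : Fin n → ℝ, dprod ξ₀ y = g y := by
        intro y
        conv_rhs => rw [pi_eq_sum_univ y]
        rw [map_sum]
        unfold dprod
        congr 1; ext j
        rw [_root_.map_smul, smul_eq_mul, hξ₀]; ring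
      have hξ₀sep : ∀ i, dprod ξ₀ (X i) < dprod ξ₀ x := by
        intro i
        rw [hrep, hrep]
        exact lt_trans (hgu _ (subset_convexHull ℝ _ (mem_range_self i))) hgs
      set U : Set (Fin n → ℝ) := ⋂ i : Fin N, {ξ | dprod ξ (X i) < dprod ξ x} with hU
      have hUopen : IsOpen U :=
        isOpen_iInter_of_finite fun i =>
          isOpen_lt (dprod_continuous (X i)) (dprod_continuous x)
      obtain ⟨ξ, hξD, hξU⟩ := hDd.exists_mem_open hUopen ⟨ξ₀, mem_iInter.2 hξ₀sep⟩
      obtain ⟨i, hi⟩ := h ξ hξD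
      exact absurd hi (not_le.2 (mem_iInter.1 hξU i))
  rw [hEq]
  refine MeasurableSet.biInter hDc fun ξ _ => MeasurableSet.iUnion fun i => ?_
  exact measurableSet_le
    ((dprod_continuous' ξ).measurable.comp measurable_snd)
    ((dprod_continuous' ξ).measurable.comp ((measurable_pi_apply i).comp measurable_fst))

lemma marginal {n N : ℕ} (μ : Measure (Fin n → ℝ)) [IsProbabilityMeasure μ]
    (i : Fin N) (H : Set (Fin n → ℝ)) :
    (Measure.pi fun _ : Fin N => μ) (Function.eval i ⁻¹' H) = μ H := by
  rw [Set.eval_preimage, Measure.pi_pi]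
  rw [Finset.prod_eq_single i]
  · rw [Function.update_self]
  · intro j _ hj
    rw [Function.update_of_ne hj]
    exact measure_univ
  · intro h; exact absurd (Finset.mem_univ i) h

theorem stmt10 (n N : ℕ) (μn : Measure (Fin n → ℝ)) [IsProbabilityMeasure μn]
    (r : ℝ) (hr : 0 < r) :
    ∫⁻ X : Fin N → Fin n → ℝ, μn (convexHull ℝ (range X)) ∂(Measure.pi fun _ => μn)
      ≤ μn {x | (⨆ ξ : Fin n → ℝ,
            (∑ i, ξ i * x i - log (∫ z, exp (∑ i, ξ i * z i) ∂μn))) ≤ r}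
        + N * ENNReal.ofReal (exp (-r)) := by
  rcases Nat.eq_zero_or_pos N with hN | hN
  · subst hN
    have h0 : ∀ X : Fin 0 → Fin n → ℝ, μn (convexHull ℝ (range X)) = 0 := by
      intro X
      rw [range_eq_empty, convexHull_empty, measure_empty]
    simp only [h0, lintegral_zero]
    exact zero_le
  haveI : Nonempty (Fin N) := ⟨⟨0, hN⟩⟩
  show _ ≤ μn {x | (⨆ ξ : Fin n → ℝ,
      (dprod ξ x - log (∫ z, exp (dprod ξ z) ∂μn))) ≤ r} + N * ENNReal.ofReal (exp (-r))
  set P : Measure (Fin N → Fin n → ℝ) := Measure.pi fun _ => μn with hP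
  haveI : IsProbabilityMeasure P := by rw [hP]; infer_instance
  set A : Set ((Fin N → Fin n → ℝ) × (Fin n → ℝ)) :=
    {p | p.2 ∈ convexHull ℝ (range p.1)} with hAdef
  have hA : MeasurableSet A := convMeas
  set Br : Set (Fin n → ℝ) :=
    {x | (⨆ ξ : Fin n → ℝ, (dprod ξ x - log (∫ z, exp (dprod ξ z) ∂μn))) ≤ r} with hBr
  calc ∫⁻ X, μn (convexHull ℝ (range X)) ∂P
      = ∫⁻ X, ∫⁻ x, A.indicator 1 (X, x) ∂μn ∂P := by
        refine lintegral_congr fun X => ?_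
        have hsl : MeasurableSet {x | (X, x) ∈ A} := measurable_prodMk_left hA
        calc μn (convexHull ℝ (range X)) = μn {x | (X, x) ∈ A} := rfl
        _ = ∫⁻ x, ({x | (X, x) ∈ A}).indicator 1 x ∂μn := (lintegral_indicator_one hsl).symm
        _ = ∫⁻ x, A.indicator 1 (X, x) ∂μn := by
            refine lintegral_congr fun x => ?_
            by_cases h : (X, x) ∈ A <;> simp [Set.indicator_apply, h]
    _ = ∫⁻ x, ∫⁻ X, A.indicator 1 (X, x) ∂P ∂μn :=
        lintegral_lintegral_swap ((measurable_one.indicator hA).aemeasurable)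
    _ ≤ ∫⁻ x, (Br.indicator 1 x + N * ENNReal.ofReal (exp (-r))) ∂μn := by
        refine lintegral_mono fun x => ?_
        by_cases hxB : x ∈ Br
        · have h1 : ∫⁻ X, A.indicator 1 (X, x) ∂P ≤ 1 := by
            calc ∫⁻ X, A.indicator 1 (X, x) ∂P ≤ ∫⁻ _, 1 ∂P := by
                  refine lintegral_mono fun X => ?_
                  by_cases h : (X, x) ∈ A <;> simp [Set.indicator_apply, h]
            _ = 1 := by rw [lintegral_one, measure_univ]
          have h2 : Br.indicator (1 : (Fin n → ℝ) → ℝ≥0∞) x = 1 :=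
            Set.indicator_of_mem hxB 1
          rw [h2]
          exact le_add_right h1
        · have hx' : r < ⨆ ξ : Fin n → ℝ,
              (dprod ξ x - log (∫ z, exp (dprod ξ z) ∂μn)) := not_le.1 hxB
          obtain ⟨ξ, hint, hgt⟩ := witness μn x r hr hx'
          set H : Set (Fin n → ℝ) := {y | dprod ξ x ≤ dprod ξ y} with hH
          have hHmeas : MeasurableSet H :=
            measurableSet_le measurable_const (dprod_continuous' ξ).measurable
          have hsub : {X : Fin N → Fin n → ℝ | (X, x) ∈ A}
              ⊆ ⋃ i, Function.eval i ⁻¹' H := by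
            intro X hX
            obtain ⟨i, hi⟩ := halfspace_mem X x hX ξ
            exact mem_iUnion.2 ⟨i, hi⟩
          have hsl : MeasurableSet {X : Fin N → Fin n → ℝ | (X, x) ∈ A} :=
            measurable_prodMk_right hA
          have hmain : ∫⁻ X, A.indicator 1 (X, x) ∂P ≤ N * ENNReal.ofReal (exp (-r)) := by
            calc ∫⁻ X, A.indicator 1 (X, x) ∂P
                = ∫⁻ X, ({X : Fin N → Fin n → ℝ | (X, x) ∈ A}).indicator 1 X ∂P := by
                  refine lintegral_congr fun X => ?_
                  by_cases h : (X, x) ∈ A <;> simp [Set.indicator_apply, h]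
            _ = P {X : Fin N → Fin n → ℝ | (X, x) ∈ A} := lintegral_indicator_one hsl
            _ ≤ P (⋃ i, Function.eval i ⁻¹' H) := measure_mono hsub
            _ ≤ ∑' i : Fin N, P (Function.eval i ⁻¹' H) := measure_iUnion_le _
            _ = ∑ i : Fin N, P (Function.eval i ⁻¹' H) := tsum_fintype _
            _ ≤ ∑ _i : Fin N, ENNReal.ofReal (exp (-r)) := by
                refine Finset.sum_le_sum fun i _ => ?_
                rw [hP, marginal μn i H]
                exact chernoff_s10 μn ξ x r hint hgt
            _ = N * ENNReal.ofReal (exp (-r)) := by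
                simp [Finset.sum_const, Finset.card_univ, nsmul_eq_mul]
          exact hmain.trans le_add_self
    _ ≤ μn Br + N * ENNReal.ofReal (exp (-r)) := by
        rw [lintegral_add_right _ measurable_const]
        refine add_le_add (lintegral_indicator_one_le Br) ?_
        rw [lintegral_const, measure_univ, mul_one]
end

section
/- Let ν be the symmetric exponential distribution on ℝ with density (1/2)e^{-|x|}. Then its Cramér transform equals Λ_ν*(x) = √(1+x²) - 1 - ln((√(1+x²)+1)/2) for all x ∈ ℝ, and consequently Λ_ν*(x)/x → 1 as x → ∞. -/
open MeasureTheory Filter Set Real Topology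

noncomputable def nuExp : Measure ℝ :=
  volume.withDensity fun x => ENNReal.ofReal ((1 / 2) * exp (-|x|))

noncomputable def LambdaNu (t : ℝ) : ℝ := log (∫ s, exp (t * s) ∂nuExp)

noncomputable def LambdaNuStar (x : ℝ) : ℝ :=
  ⨆ t : (Ioo (-1:ℝ) 1), ((t : ℝ) * x - LambdaNu t)

open scoped ENNReal NNReal

lemma integral_exp_neg_mul_Ioi_zero {b : ℝ} (hb : 0 < b) :
    ∫ x in Ioi (0:ℝ), exp (-b * x) = 1 / b := by
  have h : ∀ x ∈ Ici (0:ℝ), HasDerivAt (fun x => -exp (-b * x) / b) (exp (-b * x)) x := by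
    intro x _
    have h1 : HasDerivAt (fun x : ℝ => -b * x) (-b) x := by
      simpa using (hasDerivAt_id x).const_mul (-b)
    have := (h1.exp.neg.div_const b)
    refine this.congr_deriv ?_
    rw [mul_neg, neg_neg, mul_div_assoc, div_self hb.ne', mul_one]
  have htend : Tendsto (fun x : ℝ => -exp (-b * x) / b) atTop (𝓝 0) := by
    have : Tendsto (fun x : ℝ => -exp (-b * x) / b) atTop (𝓝 (-0 / b)) := by
      refine Tendsto.div_const (Tendsto.neg ?_) _
      exact tendsto_exp_atBot.comp (tendsto_id.const_mul_atTop_of_neg (by linarith))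
    simpa using this
  have := integral_Ioi_of_hasDerivAt_of_tendsto' h (exp_neg_integrableOn_Ioi 0 hb) htend
  rw [this]; field_simp
  simp

lemma integral_nuExp {t : ℝ} (ht : t ∈ Ioo (-1:ℝ) 1) :
    ∫ s, exp (t * s) ∂nuExp = (1 - t^2)⁻¹ := by
  obtain ⟨ht1, ht2⟩ := ht
  have hmeas : Measurable fun x : ℝ => ((1 / 2) * exp (-|x|)).toNNReal :=
    (measurable_const.mul measurable_abs.neg.exp).real_toNNReal
  have hd : nuExp = volume.withDensity fun x : ℝ => (((1/2) * exp (-|x|)).toNNReal : ℝ≥0∞) := rfl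
  rw [hd, integral_withDensity_eq_integral_smul hmeas]
  have heq : ∀ x : ℝ, ((1/2 : ℝ) * exp (-|x|)).toNNReal • exp (t * x)
      = (1/2) * exp (t * x - |x|) := by
    intro x
    rw [NNReal.smul_def, Real.coe_toNNReal _ (by positivity), sub_eq_add_neg, exp_add]
    rw [smul_eq_mul]
    ring
  simp_rw [heq]
  have hIoi : IntegrableOn (fun x : ℝ => (1/2) * exp (t * x - |x|)) (Ioi 0) := by
    refine MeasureTheory.IntegrableOn.congr_fun
      ((exp_neg_integrableOn_Ioi 0 (show (0:ℝ) < 1 - t by linarith)).const_mul (1/2))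
      (fun x hx => ?_) measurableSet_Ioi
    rw [abs_of_pos hx]
    ring_nf
  have hIic : IntegrableOn (fun x : ℝ => (1/2) * exp (t * x - |x|)) (Iic 0) := by
    rw [← Measure.map_neg_eq_self (volume : Measure ℝ)]
    have m : MeasurableEmbedding fun x : ℝ => -x := (Homeomorph.neg ℝ).measurableEmbedding
    rw [m.integrableOn_map_iff]
    simp_rw [Function.comp_def, abs_neg, neg_preimage, neg_Iic, neg_zero]
    refine (integrableOn_Ici_iff_integrableOn_Ioi).mpr ?_
    refine MeasureTheory.IntegrableOn.congr_fun
      ((exp_neg_integrableOn_Ioi 0 (show (0:ℝ) < 1 + t by linarith)).const_mul (1/2))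
      (fun x hx => ?_) measurableSet_Ioi
    rw [abs_of_pos hx]
    ring_nf
  rw [← intervalIntegral.integral_Iic_add_Ioi hIic hIoi]
  have e1 : ∫ x in Ioi (0:ℝ), (1/2) * exp (t * x - |x|) = (1/2) * (1/(1-t)) := by
    rw [setIntegral_congr_fun measurableSet_Ioi
      (g := fun x : ℝ => (1/2) * exp (-(1-t) * x)) ?_]
    · rw [MeasureTheory.integral_const_mul, integral_exp_neg_mul_Ioi_zero (by linarith)]
    · intro x hx
      simp only
      rw [abs_of_pos hx]
      ring_nf
  have e2 : ∫ x in Iic (0:ℝ), (1/2) * exp (t * x - |x|) = (1/2) * (1/(1+t)) := by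
    have hcong : EqOn (fun x : ℝ => (1/2) * exp (t * x - |x|))
        (fun x : ℝ => (fun y : ℝ => (1/2) * exp (-(1+t) * y)) (-x)) (Iic 0) := by
      intro x hx
      simp only
      rw [abs_of_nonpos hx]
      ring_nf
    rw [setIntegral_congr_fun measurableSet_Iic hcong,
      integral_comp_neg_Iic 0 (fun y : ℝ => (1/2) * exp (-(1+t) * y)), neg_zero]
    rw [MeasureTheory.integral_const_mul, integral_exp_neg_mul_Ioi_zero (by linarith)]
  rw [e1, e2]
  have h1 : (1:ℝ) - t ≠ 0 := by linarith
  have h2 : (1:ℝ) + t ≠ 0 := by linarith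
  have h3 : (1:ℝ) - t^2 ≠ 0 := by nlinarith
  field_simp
  ring

lemma lambdaNu_eq {t : ℝ} (ht : t ∈ Ioo (-1:ℝ) 1) :
    LambdaNu t = -log (1 - t^2) := by
  rw [LambdaNu, integral_nuExp ht, log_inv]

instance : Nonempty ↥(Ioo (-1:ℝ) 1) := ⟨⟨0, by norm_num⟩⟩

lemma lambdaNuStar_eq (x : ℝ) :
    LambdaNuStar x = Real.sqrt (1 + x ^ 2) - 1 - log ((Real.sqrt (1 + x ^ 2) + 1) / 2) := by
  set s := Real.sqrt (1 + x ^ 2) with hs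
  have hs0 : (0:ℝ) ≤ 1 + x ^ 2 := by positivity
  have hssq : s ^ 2 = 1 + x ^ 2 := Real.sq_sqrt hs0
  have hsnn : (0:ℝ) ≤ s := Real.sqrt_nonneg _
  have hs1 : 1 ≤ s := by nlinarith [sq_nonneg x]
  have hsp : (0:ℝ) < s + 1 := by linarith
  set u := x / (s + 1) with hu
  have hu2 : u ^ 2 < 1 := by
    rw [hu, div_pow]
    rw [div_lt_one (by positivity)]
    nlinarith
  have humem : u ∈ Ioo (-1:ℝ) 1 := by
    constructor <;> nlinarith [sq_nonneg (u - 1), sq_nonneg (u + 1)]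
  have hux : u * x = s - 1 := by
    rw [hu]
    field_simp
    nlinarith
  have huv : 1 - u ^ 2 = 2 / (s + 1) := by
    rw [hu, div_pow]
    field_simp
    nlinarith
  have hkey : x * (1 - u ^ 2) = 2 * u := by
    rw [huv, hu]
    field_simp
  have hval : u * x + log (1 - u ^ 2) = s - 1 - log ((s + 1) / 2) := by
    rw [hux, huv, show (2:ℝ) / (s + 1) = ((s + 1) / 2)⁻¹ by rw [inv_div], log_inv]
    ring
  -- upper bound for every t ∈ Ioo
  have hbound : ∀ t ∈ Ioo (-1:ℝ) 1, t * x + log (1 - t ^ 2) ≤ u * x + log (1 - u ^ 2) := by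
    intro t ht
    have ht2 : t ^ 2 < 1 := by nlinarith [ht.1, ht.2]
    have hpt : (0:ℝ) < 1 - t ^ 2 := by linarith
    have hpu : (0:ℝ) < 1 - u ^ 2 := by linarith
    have hlog : log (1 - t ^ 2) - log (1 - u ^ 2) ≤ (1 - t ^ 2) / (1 - u ^ 2) - 1 := by
      rw [← Real.log_div hpt.ne' hpu.ne']
      exact Real.log_le_sub_one_of_pos (by positivity)
    have halg : t * x - u * x + ((1 - t ^ 2) / (1 - u ^ 2) - 1)
        = -((t - u) ^ 2 / (1 - u ^ 2)) := by
      field_simp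
      linear_combination (t - u) * hkey
    linarith [div_nonneg (sq_nonneg (t - u)) hpu.le, hlog, halg]
  have hterm : ∀ t : ↥(Ioo (-1:ℝ) 1), (t : ℝ) * x - LambdaNu t
      = (t : ℝ) * x + log (1 - (t:ℝ) ^ 2) := by
    intro t
    rw [lambdaNu_eq t.2]
    ring
  rw [LambdaNuStar]
  have hb : BddAbove (range fun t : ↥(Ioo (-1:ℝ) 1) => (t : ℝ) * x - LambdaNu t) := by
    refine ⟨s - 1 - log ((s + 1) / 2), ?_⟩
    rintro y ⟨t, rfl⟩
    show (t : ℝ) * x - LambdaNu t ≤ _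
    rw [hterm t, ← hval]
    exact hbound t t.2
  apply le_antisymm
  · apply ciSup_le
    intro t
    show (t : ℝ) * x - LambdaNu t ≤ _
    rw [hterm t, ← hval]
    exact hbound t t.2
  · rw [← hval]
    refine le_trans (le_of_eq ?_) (le_ciSup hb (⟨u, humem⟩ : ↥(Ioo (-1:ℝ) 1)))
    exact (hterm ⟨u, humem⟩).symm

theorem stmt14 :
    (∀ x : ℝ, LambdaNuStar x
      = Real.sqrt (1 + x ^ 2) - 1 - log ((Real.sqrt (1 + x ^ 2) + 1) / 2)) ∧
    Tendsto (fun x : ℝ => LambdaNuStar x / x) atTop (𝓝 1) := by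
  refine ⟨lambdaNuStar_eq, ?_⟩
  have hT2 : Tendsto (fun x : ℝ => 1 / x) atTop (𝓝 0) := by
    simpa [one_div] using (tendsto_inv_atTop_zero : Tendsto (fun x : ℝ => x⁻¹) atTop (𝓝 0))
  have hT1 : Tendsto (fun x : ℝ => Real.sqrt (1 + x ^ 2) / x) atTop (𝓝 1) := by
    have h : Tendsto (fun x : ℝ => Real.sqrt (1 / x ^ 2 + 1)) atTop (𝓝 1) := by
      have h0 : Tendsto (fun x : ℝ => 1 / x ^ 2 + 1) atTop (𝓝 (0 + 1)) := by
        have h5 := (hT2.mul hT2).add (tendsto_const_nhds (x := (1:ℝ)) (f := atTop))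
        rw [mul_zero] at h5
        exact h5.congr fun x => by ring
      have := (Real.continuous_sqrt.tendsto (0 + 1)).comp h0
      simpa [Function.comp_def] using this
    refine h.congr' ?_
    filter_upwards [eventually_gt_atTop (0:ℝ)] with x hx
    rw [show 1 / x ^ 2 + 1 = (1 + x ^ 2) / x ^ 2 by field_simp,
      Real.sqrt_div (by positivity) (x ^ 2), Real.sqrt_sq hx.le]
  have hlogdiv : Tendsto (fun x : ℝ => log (1 + x) / x) atTop (𝓝 0) := by
    have h0 : Tendsto (fun y : ℝ => log y / y) atTop (𝓝 0) :=
      Real.isLittleO_log_id_atTop.tendsto_div_nhds_zero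
    have h1 : Tendsto (fun x : ℝ => log (1 + x) / (1 + x)) atTop (𝓝 0) :=
      h0.comp (tendsto_atTop_add_const_left _ 1 tendsto_id)
    have h2 : Tendsto (fun x : ℝ => (1 + x) / x) atTop (𝓝 1) := by
      have h3 : Tendsto (fun x : ℝ => 1 / x + 1) atTop (𝓝 (0 + 1)) :=
        hT2.add tendsto_const_nhds
      refine (show Tendsto (fun x : ℝ => 1 / x + 1) atTop (𝓝 1) by simpa using h3).congr' ?_
      filter_upwards [eventually_ne_atTop (0:ℝ)] with x hx
      field_simp
    have h4 := h1.mul h2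
    rw [zero_mul] at h4
    refine h4.congr' ?_
    filter_upwards [eventually_gt_atTop (0:ℝ)] with x hx
    field_simp
  have hT3 : Tendsto (fun x : ℝ => log ((Real.sqrt (1 + x ^ 2) + 1) / 2) / x) atTop (𝓝 0) := by
    refine tendsto_of_tendsto_of_tendsto_of_le_of_le' tendsto_const_nhds hlogdiv ?_ ?_
    · filter_upwards [eventually_ge_atTop (1:ℝ)] with x hx
      have hs1 : 1 ≤ Real.sqrt (1 + x ^ 2) := by
        nlinarith [Real.sq_sqrt (show (0:ℝ) ≤ 1 + x ^ 2 by positivity),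
          Real.sqrt_nonneg (1 + x ^ 2), sq_nonneg x]
      exact div_nonneg (Real.log_nonneg (by linarith)) (by linarith)
    · filter_upwards [eventually_ge_atTop (1:ℝ)] with x hx
      have hsle : Real.sqrt (1 + x ^ 2) ≤ 1 + x := by
        rw [show (1:ℝ) + x = Real.sqrt ((1 + x) ^ 2) by rw [Real.sqrt_sq (by linarith)]]
        exact Real.sqrt_le_sqrt (by nlinarith)
      have hs1 : 1 ≤ Real.sqrt (1 + x ^ 2) := by
        nlinarith [Real.sq_sqrt (show (0:ℝ) ≤ 1 + x ^ 2 by positivity),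
          Real.sqrt_nonneg (1 + x ^ 2), sq_nonneg x]
      have hloglog : log ((Real.sqrt (1 + x ^ 2) + 1) / 2) ≤ log (1 + x) := by
        apply Real.log_le_log (by linarith)
        linarith
      exact div_le_div_of_nonneg_right hloglog (by linarith) |>.trans_eq rfl
  have heq : (fun x : ℝ => LambdaNuStar x / x)
      = fun x : ℝ => Real.sqrt (1 + x ^ 2) / x - 1 / x
          - log ((Real.sqrt (1 + x ^ 2) + 1) / 2) / x := by
    funext x
    rw [lambdaNuStar_eq x, sub_div, sub_div]
  rw [heq]
  simpa using (hT1.sub hT2).sub hT3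
end

section
/- Let q ≥ 1, a > 0, and f : [a,∞) → ℝ be continuously differentiable with f' increasing on [a,∞) and f(t)/t^q → 1 as t → +∞. Then f'(t)/(q t^{q-1}) → 1 as t → +∞. -/
open MeasureTheory Filter Set Real Topology

theorem stmt17 (q a : ℝ) (hq : 1 ≤ q) (ha : 0 < a) (f f' : ℝ → ℝ)
    (hderiv : ∀ x ∈ Ici a, HasDerivAt f (f' x) x)
    (hcont : ContinuousOn f' (Ici a))
    (hmono : MonotoneOn f' (Ici a))
    (hasym : Tendsto (fun t => f t / t ^ q) atTop (𝓝 1)) :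
    Tendsto (fun t => f' t / (q * t ^ (q - 1))) atTop (𝓝 1) := by
  have hq0 : (0:ℝ) < q := lt_of_lt_of_le one_pos hq
  -- slope inequalities from MVT and monotonicity
  have key : ∀ x y, a ≤ x → x < y →
      (y - x) * f' x ≤ f y - f x ∧ f y - f x ≤ (y - x) * f' y := by
    intro x y hax hxy
    have hIcc : Icc x y ⊆ Ici a := fun z hz => le_trans hax hz.1
    obtain ⟨c, hc, hceq⟩ := exists_hasDerivAt_eq_slope f f' hxy
      (fun z hz => ((hderiv z (hIcc hz)).continuousAt).continuousWithinAt)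
      (fun z hz => hderiv z (hIcc (Ioo_subset_Icc_self hz)))
    have hca : a ≤ c := le_trans hax hc.1.le
    have h1 : f' x ≤ f' c := hmono hax hca hc.1.le
    have h2 : f' c ≤ f' y := hmono hca (le_trans hax hxy.le) hc.2.le
    have hyx : 0 < y - x := sub_pos.2 hxy
    have heq : f y - f x = (y - x) * f' c := by
      rw [hceq]; field_simp
    constructor <;> nlinarith
  -- limit of slopes of x ^ q at 1
  have hslope : Tendsto (fun x : ℝ => (x ^ q - 1) / (x - 1)) (𝓝[≠] 1) (𝓝 q) := by
    have h := Real.hasDerivAt_rpow_const (x := (1:ℝ)) (p := q) (Or.inl one_ne_zero)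
    rw [Real.one_rpow, mul_one] at h
    have h2 := hasDerivAt_iff_tendsto_slope.mp h
    have heq : (slope (fun x : ℝ => x ^ q) 1) = fun x : ℝ => (x ^ q - 1) / (x - 1) := by
      funext x
      rw [slope_def_field]; simp [div_eq_div_iff]
    rwa [heq] at h2
  have hmap1 : Tendsto (fun ε : ℝ => 1 + ε) (𝓝[>] 0) (𝓝[≠] 1) := by
    apply tendsto_nhdsWithin_of_tendsto_nhds_of_eventually_within
    · have : Tendsto (fun ε : ℝ => 1 + ε) (𝓝 0) (𝓝 (1+0)) :=
        (continuous_const.add continuous_id).tendsto 0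
      norm_num at this; exact this.mono_left nhdsWithin_le_nhds
    · filter_upwards [self_mem_nhdsWithin] with ε hε
      have hε' : (0:ℝ) < ε := hε
      simp only [mem_compl_iff, mem_singleton_iff]
      intro h; linarith
  have hmap2 : Tendsto (fun ε : ℝ => 1 - ε) (𝓝[>] 0) (𝓝[≠] 1) := by
    apply tendsto_nhdsWithin_of_tendsto_nhds_of_eventually_within
    · have : Tendsto (fun ε : ℝ => 1 - ε) (𝓝 0) (𝓝 (1-0)) :=
        (continuous_const.sub continuous_id).tendsto 0
      norm_num at this; exact this.mono_left nhdsWithin_le_nhds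
    · filter_upwards [self_mem_nhdsWithin] with ε hε
      have hε' : (0:ℝ) < ε := hε
      simp only [mem_compl_iff, mem_singleton_iff]
      intro h; linarith
  have hU : Tendsto (fun ε : ℝ => ((1+ε) ^ q - 1) / (q * ε)) (𝓝[>] 0) (𝓝 1) := by
    have h1 := hslope.comp hmap1
    have h2 : ∀ ε : ℝ, ((fun x : ℝ => (x ^ q - 1) / (x - 1)) ∘ (fun ε : ℝ => 1 + ε)) ε
        = ((1+ε) ^ q - 1) / ε := by
      intro ε; simp [Function.comp]
    rw [funext h2] at h1
    have h3 := h1.div_const q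
    have h4 : ∀ ε : ℝ, ((1+ε) ^ q - 1) / ε / q = ((1+ε) ^ q - 1) / (q * ε) := by
      intro ε; rw [div_div, mul_comm]
    rw [funext h4] at h3
    simpa [div_self hq0.ne'] using h3
  have hL : Tendsto (fun ε : ℝ => (1 - (1-ε) ^ q) / (q * ε)) (𝓝[>] 0) (𝓝 1) := by
    have h1 := hslope.comp hmap2
    have h2 : ∀ ε : ℝ, ((fun x : ℝ => (x ^ q - 1) / (x - 1)) ∘ (fun ε : ℝ => 1 - ε)) ε
        = (1 - (1-ε) ^ q) / ε := by
      intro ε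
      simp only [Function.comp]
      rw [show (1 - ε - 1 : ℝ) = -ε by ring, div_neg, ← neg_div, neg_sub]
    rw [funext h2] at h1
    have h3 := h1.div_const q
    have h4 : ∀ ε : ℝ, (1 - (1-ε) ^ q) / ε / q = (1 - (1-ε) ^ q) / (q * ε) := by
      intro ε; rw [div_div, mul_comm]
    rw [funext h4] at h3
    simpa [div_self hq0.ne'] using h3
  -- main argument
  rw [Metric.tendsto_nhds]
  intro δ hδ
  simp only [Real.dist_eq]
  -- choose ε
  obtain ⟨ε, hε01, hUε, hLε⟩ : ∃ ε : ℝ, ε ∈ Ioo (0:ℝ) 1 ∧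
      ((1+ε) ^ q - 1) / (q * ε) < 1 + δ/2 ∧ 1 - δ/2 < (1 - (1-ε) ^ q) / (q * ε) := by
    have h1 : ∀ᶠ e in 𝓝[>] (0:ℝ), ((1+e) ^ q - 1) / (q * e) < 1 + δ/2 :=
      hU.eventually_lt_const (by linarith)
    have h2 : ∀ᶠ e in 𝓝[>] (0:ℝ), 1 - δ/2 < (1 - (1-e) ^ q) / (q * e) :=
      hL.eventually_const_lt (by linarith)
    have h3 : ∀ᶠ e in 𝓝[>] (0:ℝ), e ∈ Ioo (0:ℝ) 1 :=
      Ioo_mem_nhdsGT_of_mem ⟨le_refl 0, one_pos⟩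
    obtain ⟨e, he3, he1, he2⟩ := (h3.and (h1.and h2)).exists
    exact ⟨e, he3, he1, he2⟩
  have hεpos : (0:ℝ) < ε := hε01.1
  have hε1 : ε < 1 := hε01.2
  have h1e : (0:ℝ) < 1 - ε := by linarith
  have h1e' : (0:ℝ) < 1 + ε := by linarith
  -- limits in t
  have hg1 : Tendsto (fun t => f ((1+ε)*t) / ((1+ε)*t) ^ q) atTop (𝓝 1) := by
    have hm : Tendsto (fun t : ℝ => (1+ε)*t) atTop atTop :=
      Tendsto.const_mul_atTop h1e' tendsto_id
    exact hasym.comp hm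
  have hg2 : Tendsto (fun t => f ((1-ε)*t) / ((1-ε)*t) ^ q) atTop (𝓝 1) := by
    have hm : Tendsto (fun t : ℝ => (1-ε)*t) atTop atTop :=
      Tendsto.const_mul_atTop h1e tendsto_id
    exact hasym.comp hm
  have hUt : Tendsto
      (fun t => (f ((1+ε)*t) / ((1+ε)*t) ^ q * (1+ε) ^ q - f t / t ^ q) / (q*ε)) atTop
      (𝓝 (((1+ε) ^ q - 1) / (q*ε))) := by
    have := ((hg1.mul_const ((1+ε) ^ q)).sub hasym).div_const (q*ε)
    rwa [one_mul] at this
  have hLt : Tendsto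
      (fun t => (f t / t ^ q - f ((1-ε)*t) / ((1-ε)*t) ^ q * (1-ε) ^ q) / (q*ε)) atTop
      (𝓝 ((1 - (1-ε) ^ q) / (q*ε))) := by
    have := (hasym.sub (hg2.mul_const ((1-ε) ^ q))).div_const (q*ε)
    rwa [one_mul] at this
  filter_upwards [hUt.eventually_lt_const (by linarith : ((1+ε) ^ q - 1) / (q*ε) < 1 + δ),
    hLt.eventually_const_lt (by linarith : 1 - δ < (1 - (1-ε) ^ q) / (q*ε)),
    eventually_ge_atTop (max a (a / (1-ε))), eventually_gt_atTop (0:ℝ)]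
    with t hU' hL' hta ht0
  have hta' : a ≤ t := le_trans (le_max_left _ _) hta
  have hta2 : a ≤ (1-ε)*t := by
    have h := le_trans (le_max_right _ _) hta
    rw [div_le_iff₀ h1e] at h
    nlinarith
  have htq1 : (0:ℝ) < t ^ (q-1) := Real.rpow_pos_of_pos ht0 _
  have htq : (0:ℝ) < t ^ q := Real.rpow_pos_of_pos ht0 _
  have hsplit : t ^ q = t * t ^ (q-1) := by
    have h := Real.rpow_add ht0 1 (q-1)
    rw [Real.rpow_one] at h
    rw [← h]; congr 1; ring
  -- upper bound
  have hub : f' t / (q * t ^ (q-1)) ≤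
      (f ((1+ε)*t) / ((1+ε)*t) ^ q * (1+ε) ^ q - f t / t ^ q) / (q*ε) := by
    have h1 := (key t ((1+ε)*t) hta' (by nlinarith)).1
    have hnum : f ((1+ε)*t) / ((1+ε)*t) ^ q * (1+ε) ^ q - f t / t ^ q
        = (f ((1+ε)*t) - f t) / t ^ q := by
      rw [Real.mul_rpow h1e'.le ht0.le]
      field_simp
    rw [hnum, div_div, div_le_div_iff₀ (by positivity) (by positivity), hsplit]
    nlinarith [mul_le_mul_of_nonneg_right h1 (mul_pos hq0 htq1).le]
  -- lower bound
  have hlb : (f t / t ^ q - f ((1-ε)*t) / ((1-ε)*t) ^ q * (1-ε) ^ q) / (q*ε) ≤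
      f' t / (q * t ^ (q-1)) := by
    have h1 := (key ((1-ε)*t) t hta2 (by nlinarith)).2
    have hnum : f t / t ^ q - f ((1-ε)*t) / ((1-ε)*t) ^ q * (1-ε) ^ q
        = (f t - f ((1-ε)*t)) / t ^ q := by
      rw [Real.mul_rpow h1e.le ht0.le]
      field_simp
    rw [hnum, div_div, div_le_div_iff₀ (by positivity) (by positivity), hsplit]
    nlinarith [mul_le_mul_of_nonneg_right h1 (mul_pos hq0 htq1).le]
  rw [abs_lt]
  constructor <;> [linarith; linarith]
end
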